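/- arXiv:2502.07334 — 2 statements merged into one kernel-verified Lean document; each statement's English description precedes it below -/
import Mathlib

section
/- Let f : X → X be a continuous self-map of a compact metric space, x ∈ X, and suppose f is equicontinuous at x. If x lies in the closure of the set 𝔸(f) = {y : ω(y,f) is a periodic orbit or an odometer}, then x ∈ 𝔸(f). -/
open Filter Topology Metric Set

/-- A periodic structure: a sequence of positive integers with `m j ∣ m (j+1)` and `m j → ∞`. -/
structure PeriodicStructure where
  m : ℕ → ℕ
  pos : ∀ j, 0 < m j
  dvd : ∀ j, m j ∣ m (j + 1)
  tendsto : Filter.Tendsto m Filter.atTop Filter.atTop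

/-- The odometer space `X_m` of a periodic structure. -/
def PeriodicStructure.space (p : PeriodicStructure) : Type :=
  {x : ℕ → ℕ // ∀ j, x j < p.m j ∧ x (j + 1) % p.m j = x j}

instance (p : PeriodicStructure) : TopologicalSpace p.space :=
  inferInstanceAs (TopologicalSpace
    {x : ℕ → ℕ // ∀ j, x j < p.m j ∧ x (j + 1) % p.m j = x j})

/-- The odometer map `g_m` (adding 1 coordinatewise mod `m j`). -/
def PeriodicStructure.step (p : PeriodicStructure) (x : p.space) : p.space :=
  ⟨fun j => (x.1 j + 1) % p.m j, by
    intro j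
    refine ⟨Nat.mod_lt _ (p.pos j), ?_⟩
    show (x.1 (j + 1) + 1) % p.m (j + 1) % p.m j = (x.1 j + 1) % p.m j
    rw [Nat.mod_mod_of_dvd _ (p.dvd j), ← (x.2 j).2, Nat.add_mod]
    exact Nat.add_mod_mod _ _ _⟩

/-- `S` is an odometer for `f`: `f` restricted to `S` is topologically conjugate to
an odometer `g_m : X_m → X_m`. -/
def IsOdometer {X : Type*} [TopologicalSpace X] (f : X → X) (S : Set X) : Prop :=
  ∃ p : PeriodicStructure, ∃ h : p.space ≃ₜ S,
    ∀ z : p.space, f ((h z : X)) = ((h (p.step z) : X))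

/-- `S` is a periodic orbit of `f`. -/
def IsPeriodicOrbit {X : Type*} (f : X → X) (S : Set X) : Prop :=
  ∃ x ∈ S, ∃ i : ℕ, 0 < i ∧ f^[i] x = x ∧ S = {y | ∃ j < i, f^[j] x = y}

/-- The ω-limit set of a sequence of points. -/
def omegaLimitSeq {X : Type*} [TopologicalSpace X] (x : ℕ → X) : Set X :=
  {y | ∃ φ : ℕ → ℕ, StrictMono φ ∧
    Filter.Tendsto (fun j => x (φ j)) Filter.atTop (nhds y)}

/-- The ω-limit set `ω(x, f)` of a point. -/
def omegaLimitPt {X : Type*} [TopologicalSpace X] (f : X → X) (x : X) : Set X :=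
  omegaLimitSeq fun i => f^[i] x

/-- `M` is a minimal set for `f`. -/
def IsMinimalSet {X : Type*} [TopologicalSpace X] (f : X → X) (M : Set X) : Prop :=
  M.Nonempty ∧ IsClosed M ∧ Set.MapsTo f M M ∧
    ∀ S ⊆ M, IsClosed S → Set.MapsTo f S S → S = ∅ ∨ S = M

/-- `x` is a minimal point for `f`. -/
def IsMinimalPoint {X : Type*} [TopologicalSpace X] (f : X → X) (x : X) : Prop :=
  IsMinimalSet f (closure (Set.range fun i => f^[i] x))

/-- `x` is a regularly recurrent point for `f`. -/
def RegularlyRecurrent {X : Type*} [PseudoMetricSpace X] (f : X → X) (x : X) : Prop :=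
  ∀ ε > 0, ∃ n : ℕ, 0 < n ∧ ∀ k : ℕ, dist x (f^[k * n] x) ≤ ε

/-- `f` has the shadowing property. -/
def ShadowingProperty {X : Type*} [PseudoMetricSpace X] (f : X → X) : Prop :=
  ∀ ε > 0, ∃ δ > 0, ∀ ξ : ℕ → X,
    (∀ i, dist (f (ξ i)) (ξ (i + 1)) ≤ δ) → ∃ y, ∀ i, dist (f^[i] y) (ξ i) ≤ ε

set_option linter.unusedSectionVars false
set_option maxHeartbeats 2000000


section Aux
variable {X : Type*} [MetricSpace X] [CompactSpace X] {f : X → X}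

lemma omega_char {y u : X} :
    u ∈ omegaLimitPt f y ↔ ∀ ε > (0:ℝ), ∀ N : ℕ, ∃ i ≥ N, dist (f^[i] y) u < ε := by
  constructor
  · rintro ⟨φ, hφ, hlim⟩ ε hε N
    obtain ⟨T, hT⟩ := (Metric.tendsto_atTop.mp hlim) ε hε
    exact ⟨φ (max T N), le_trans (le_max_right T N) hφ.le_apply, hT _ (le_max_left T N)⟩
  · intro h
    have hg : ∀ N : ℕ, ∃ i, N ≤ i ∧ dist (f^[i] y) u < 1/((N:ℝ)+1) := by
      intro N
      obtain ⟨i, hi, hd⟩ := h (1/((N:ℝ)+1)) (by positivity) N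
      exact ⟨i, hi, hd⟩
    choose g hg1 hg2 using hg
    set φ : ℕ → ℕ := fun t => Nat.rec (g 0) (fun _ prev => g (prev + 1)) t with hφdef
    have hφs : ∀ t, φ (t+1) = g (φ t + 1) := fun t => rfl
    have hmono : StrictMono φ := strictMono_nat_of_lt_succ (fun t => by
      rw [hφs]; exact lt_of_lt_of_le (Nat.lt_succ_self _) (hg1 _))
    have hge : ∀ t, t ≤ φ t := fun t => hmono.le_apply
    have hd : ∀ t, dist (f^[φ t] y) u < 1/((t:ℝ)+1) := by
      intro t
      cases t with
      | zero => exact hg2 0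
      | succ t =>
        have h1 : dist (f^[φ (t+1)] y) u < 1/((↑(φ t + 1):ℝ)+1) := by
          rw [hφs]; exact hg2 _
        refine h1.trans_le (one_div_le_one_div_of_le (by positivity) ?_)
        have := hge t
        push_cast
        have : (t:ℝ) ≤ (φ t : ℝ) := by exact_mod_cast this
        linarith
    refine ⟨φ, hmono, Metric.tendsto_atTop.mpr ?_⟩
    intro ε hε
    obtain ⟨T, hT⟩ := exists_nat_one_div_lt hε
    refine ⟨T, fun t ht => ?_⟩
    have h1 : 1/((t:ℝ)+1) ≤ 1/((T:ℝ)+1) := by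
      apply one_div_le_one_div_of_le (by positivity)
      have : (T:ℝ) ≤ t := by exact_mod_cast ht
      linarith
    exact lt_of_lt_of_le (hd t) (h1.trans hT.le)
lemma omega_nonempty (y : X) : (omegaLimitPt f y).Nonempty := by
  obtain ⟨a, -, φ, hmono, hlim⟩ :=
    isCompact_univ.tendsto_subseq (x := fun i => f^[i] y) (fun n => mem_univ _)
  exact ⟨a, φ, hmono, hlim⟩

lemma omega_closed (y : X) : IsClosed (omegaLimitPt f y) := by
  refine isClosed_of_closure_subset (fun u hu => omega_char.mpr ?_)
  intro ε hε N
  obtain ⟨u', hu', hd⟩ := Metric.mem_closure_iff.mp hu (ε/2) (by linarith)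
  obtain ⟨i, hi, hd2⟩ := omega_char.mp hu' (ε/2) (by linarith) N
  refine ⟨i, hi, ?_⟩
  have := dist_triangle (f^[i] y) u' u
  rw [dist_comm u' u] at this
  linarith

lemma omega_iterate_mem (hf : Continuous f) {y u : X} (hu : u ∈ omegaLimitPt f y) (m : ℕ) :
    f^[m] u ∈ omegaLimitPt f y := by
  obtain ⟨φ, hmono, hlim⟩ := hu
  refine ⟨fun t => φ t + m, fun a b hab => Nat.add_lt_add_right (hmono hab) m, ?_⟩
  have h2 : Tendsto (fun j => f^[m] (f^[φ j] y)) atTop (𝓝 (f^[m] u)) :=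
    ((hf.iterate m).continuousAt).tendsto.comp hlim
  refine h2.congr (fun j => ?_)
  show f^[m] (f^[φ j] y) = f^[φ j + m] y
  rw [Nat.add_comm, Function.iterate_add_apply]

lemma omega_attract (y : X) :
    ∀ η > (0:ℝ), ∃ I, ∀ i ≥ I, ∃ w ∈ omegaLimitPt f y, dist (f^[i] y) w ≤ η := by
  intro η hη
  by_contra hcon
  push_neg at hcon
  set bad : ℕ → Prop := fun i => ∀ w ∈ omegaLimitPt f y, η < dist (f^[i] y) w with hbad
  have hcon' : ∀ I, ∃ i ≥ I, bad i := by
    intro I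
    obtain ⟨i, hi, h⟩ := hcon I
    exact ⟨i, hi, h⟩
  set K : ℕ → Set X := fun t => closure {v | ∃ i ≥ t, bad i ∧ f^[i] y = v} with hK
  have hKne : ∀ t, (K t).Nonempty := by
    intro t
    obtain ⟨i, hi, hb⟩ := hcon' t
    exact ⟨f^[i] y, subset_closure ⟨i, hi, hb, rfl⟩⟩
  have hKsub : ∀ t, K (t+1) ⊆ K t := by
    intro t
    apply closure_mono
    rintro v ⟨i, hi, hb, rfl⟩
    exact ⟨i, by omega, hb, rfl⟩
  obtain ⟨z, hz⟩ := IsCompact.nonempty_iInter_of_sequence_nonempty_isCompact_isClosed K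
    hKsub hKne (isClosed_closure.isCompact) (fun t => isClosed_closure)
  simp only [Set.mem_iInter] at hz
  have hzΩ : z ∈ omegaLimitPt f y := by
    refine omega_char.mpr (fun ε hε N => ?_)
    obtain ⟨v, hv, hdv⟩ := Metric.mem_closure_iff.mp (hz N) ε hε
    obtain ⟨i, hi, hb, rfl⟩ := hv
    exact ⟨i, hi, by rw [dist_comm] at hdv; exact hdv⟩
  obtain ⟨v, hv, hdv⟩ := Metric.mem_closure_iff.mp (hz 0) η hη
  obtain ⟨i, hi, hb, rfl⟩ := hv
  have := hb z hzΩ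
  rw [dist_comm] at hdv
  linarith

lemma freq_fiber {g : ℕ → ℕ} {q : ℕ} (hg : ∀ t, g t < q) : ∃ r < q, ∀ T, ∃ t ≥ T, g t = r := by
  by_contra hcon
  push_neg at hcon
  have h2 : ∀ r, ∃ T, ∀ t ≥ T, r < q → g t ≠ r := by
    intro r
    by_cases hr : r < q
    · obtain ⟨T, hT⟩ := hcon r hr
      exact ⟨T, fun t ht _ => hT t ht⟩
    · exact ⟨0, fun t _ h => absurd h hr⟩
  choose T hT using h2
  set t0 := (Finset.range q).sup T with ht0
  exact hT (g t0) t0 (Finset.le_sup (Finset.mem_range.mpr (hg t0))) (hg t0) rfl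

lemma compact_gap {s t : Set X} (hs : IsCompact s) (ht : IsCompact t) (hd : Disjoint s t) :
    ∃ γ > (0:ℝ), ∀ a ∈ s, ∀ b ∈ t, γ ≤ dist a b := by
  rcases s.eq_empty_or_nonempty with rfl | hsne
  · exact ⟨1, one_pos, by simp⟩
  rcases t.eq_empty_or_nonempty with rfl | htne
  · exact ⟨1, one_pos, by simp⟩
  obtain ⟨⟨a0, b0⟩, hmem, hmin⟩ := (hs.prod ht).exists_isMinOn (hsne.prod htne)
    (continuous_dist.continuousOn)
  have hmem' := hmem
  rw [Set.mem_prod] at hmem'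
  have hne : a0 ≠ b0 := by
    intro h
    exact absurd hmem'.2 (Set.disjoint_left.mp hd (h ▸ hmem'.1))
  refine ⟨dist a0 b0, dist_pos.mpr hne, fun a ha b hb => ?_⟩
  exact hmin (Set.mk_mem_prod ha hb)

lemma pieces_gap (P : ℕ → Set X) (q : ℕ) (hcpt : ∀ c < q, IsCompact (P c))
    (hdisj : ∀ c < q, ∀ c' < q, c ≠ c' → Disjoint (P c) (P c')) :
    ∃ γ > (0:ℝ), ∀ c < q, ∀ c' < q, c ≠ c' → ∀ a ∈ P c, ∀ b ∈ P c', γ ≤ dist a b := by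
  have h : ∀ cc' : ℕ × ℕ, ∃ γ, 0 < γ ∧ (cc'.1 < q → cc'.2 < q → cc'.1 ≠ cc'.2 →
      ∀ a ∈ P cc'.1, ∀ b ∈ P cc'.2, γ ≤ dist a b) := by
    rintro ⟨c, c'⟩
    by_cases h1 : c < q ∧ c' < q ∧ c ≠ c'
    · obtain ⟨γ, hγ, hp⟩ := compact_gap (hcpt c h1.1) (hcpt c' h1.2.1) (hdisj _ h1.1 _ h1.2.1 h1.2.2)
      exact ⟨γ, hγ, fun _ _ _ => hp⟩
    · exact ⟨1, one_pos, fun hc hc' hne => absurd ⟨hc, hc', hne⟩ h1⟩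
  choose Γ hΓpos hΓ using h
  classical
  set F : Finset ℝ := insert 1 ((Finset.range q ×ˢ Finset.range q).image Γ) with hF
  have hFne : F.Nonempty := ⟨1, Finset.mem_insert_self _ _⟩
  refine ⟨F.min' hFne, ?_, ?_⟩
  · apply (Finset.lt_min'_iff F hFne).mpr
    intro b hb
    rcases Finset.mem_insert.mp hb with rfl | hb
    · exact one_pos
    · obtain ⟨cc', -, rfl⟩ := Finset.mem_image.mp hb
      exact hΓpos cc'
  · intro c hc c' hc' hne a ha b hb
    refine le_trans (Finset.min'_le F (Γ (c, c')) ?_) (hΓ (c, c') hc hc' hne a ha b hb)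
    exact Finset.mem_insert_of_mem (Finset.mem_image_of_mem Γ
      (Finset.mem_product.mpr ⟨Finset.mem_range.mpr hc, Finset.mem_range.mpr hc'⟩))

lemma unif (hf : Continuous f) : ∀ ε > (0:ℝ), ∃ δ > (0:ℝ), ∀ a b : X, dist a b ≤ δ → dist (f a) (f b) ≤ ε := by
  intro ε hε
  obtain ⟨δ, hδ, h⟩ := Metric.uniformContinuous_iff.mp
    (CompactSpace.uniformContinuous_of_continuous hf) ε hε
  exact ⟨δ/2, by positivity, fun a b hab => le_of_lt (h (lt_of_le_of_lt hab (by linarith)))⟩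

lemma sync (hf : Continuous f) (y : X) (S : Set X) (P : ℕ → Set X) (q : ℕ) (hq : 0 < q)
    (hcov : ∀ w ∈ S, ∃ c < q, w ∈ P c)
    (hmap : ∀ c < q, ∀ w ∈ P c, f w ∈ P ((c+1) % q))
    (γ : ℝ) (hγ : 0 < γ)
    (hgap : ∀ c < q, ∀ c' < q, c ≠ c' → ∀ a ∈ P c, ∀ b ∈ P c', γ ≤ dist a b)
    (hattr : ∀ η > (0:ℝ), ∃ I, ∀ i ≥ I, ∃ w ∈ S, dist (f^[i] y) w ≤ η)
    (β : ℝ) (hβ : 0 < β) :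
    ∃ I c₀, c₀ < q ∧ ∀ d : ℕ, ∃ w ∈ P ((c₀ + d) % q), dist (f^[I + d] y) w ≤ min β (γ/3) := by
  set ρ := min β (γ/3) with hρdef
  have hρ : 0 < ρ := lt_min hβ (by linarith)
  obtain ⟨δ, hδpos, hucont⟩ := unif hf ρ hρ
  set η := min ρ δ with hηdef
  have hη : 0 < η := lt_min hρ hδpos
  have hηρ : η ≤ ρ := min_le_left _ _
  obtain ⟨I, hI⟩ := hattr η hη
  obtain ⟨w0, hw0S, hw0d⟩ := hI I le_rfl
  obtain ⟨c₀, hc₀q, hw0P⟩ := hcov w0 hw0S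
  refine ⟨I, c₀, hc₀q, fun d => ?_⟩
  have key : ∀ d, ∃ w ∈ P ((c₀ + d) % q), dist (f^[I + d] y) w ≤ η := by
    intro d
    induction d with
    | zero =>
      refine ⟨w0, ?_, by simpa using hw0d⟩
      simpa [Nat.mod_eq_of_lt hc₀q] using hw0P
    | succ d ih =>
      obtain ⟨w, hwP, hwd⟩ := ih
      have hc : (c₀ + d) % q < q := Nat.mod_lt _ hq
      have hfw : f w ∈ P (((c₀ + d) % q + 1) % q) := hmap _ hc w hwP
      have hstep : dist (f^[I + (d+1)] y) (f w) ≤ ρ := by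
        have he : f^[I + (d+1)] y = f (f^[I + d] y) := by
          have : I + (d+1) = (I + d) + 1 := by omega
          rw [this, Function.iterate_succ_apply']
        rw [he]
        exact hucont _ _ (hwd.trans (min_le_right _ _))
      obtain ⟨w', hw'S, hw'd⟩ := hI (I + (d+1)) (by omega)
      obtain ⟨c'', hc''q, hw'P⟩ := hcov w' hw'S
      have hρ3 : ρ ≤ γ/3 := min_le_right _ _
      have hcc : c'' = ((c₀ + d) % q + 1) % q := by
        by_contra hne
        have hg := hgap c'' hc''q _ (Nat.mod_lt _ hq) hne w' hw'P (f w) hfw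
        have h1 : dist w' (f w) ≤ η + ρ := by
          have h3 := dist_triangle w' (f^[I + (d+1)] y) (f w)
          rw [dist_comm w' (f^[I + (d+1)] y)] at h3
          linarith
        linarith
      refine ⟨w', ?_, hw'd⟩
      rw [hcc, Nat.mod_add_mod] at hw'P
      exact hw'P
  obtain ⟨w, hwP, hwd⟩ := key d
  exact ⟨w, hwP, hwd.trans hηρ⟩

lemma ps_isCompact (p : PeriodicStructure) :
    IsCompact {x : ℕ → ℕ | ∀ j, x j < p.m j ∧ x (j + 1) % p.m j = x j} := by
  have hsub : {x : ℕ → ℕ | ∀ j, x j < p.m j ∧ x (j + 1) % p.m j = x j} ⊆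
      Set.pi Set.univ (fun j => Set.Iio (p.m j)) := by
    intro x hx j _
    exact (hx j).1
  have hcpt : IsCompact (Set.pi Set.univ (fun j : ℕ => Set.Iio (p.m j))) :=
    isCompact_univ_pi (fun j => (Set.finite_Iio _).isCompact)
  refine hcpt.of_isClosed_subset ?_ hsub
  have heq : {x : ℕ → ℕ | ∀ j, x j < p.m j ∧ x (j + 1) % p.m j = x j} =
      ⋂ j, ({x : ℕ → ℕ | x j < p.m j} ∩ {x | x (j + 1) % p.m j = x j}) := by
    ext x
    simp only [Set.mem_iInter, Set.mem_inter_iff, Set.mem_setOf_eq]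
  rw [heq]
  refine isClosed_iInter (fun j => IsClosed.inter ?_ ?_)
  · show IsClosed ((fun x : ℕ → ℕ => x j) ⁻¹' (Set.Iio (p.m j)))
    exact IsClosed.preimage (continuous_apply j) (isClosed_discrete _)
  · have hc : Continuous (fun x : ℕ → ℕ => ((x (j+1) % p.m j, x j) : ℕ × ℕ)) := by
      apply Continuous.prodMk
      · show Continuous ((fun a : ℕ => a % p.m j) ∘ (fun x : ℕ → ℕ => x (j+1)))
        exact Continuous.comp continuous_of_discreteTopology (continuous_apply (j+1))
      · exact continuous_apply j
    show IsClosed ((fun x : ℕ → ℕ => ((x (j+1) % p.m j, x j) : ℕ × ℕ)) ⁻¹' {pr : ℕ × ℕ | pr.1 = pr.2})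
    exact IsClosed.preimage hc (isClosed_discrete {pr : ℕ × ℕ | pr.1 = pr.2})

lemma ps_compactSpace (p : PeriodicStructure) : CompactSpace p.space :=
  isCompact_iff_compactSpace.mp (ps_isCompact p)

lemma ps_m_dvd (p : PeriodicStructure) (L j : ℕ) (h : L ≤ j) : p.m L ∣ p.m j := by
  induction j with
  | zero => rw [Nat.le_zero.mp h]
  | succ j ih =>
    rcases Nat.eq_or_lt_of_le h with rfl | h'
    · exact dvd_refl _
    · exact (ih (Nat.lt_succ_iff.mp h')).trans (p.dvd j)

lemma ps_coord_mod (p : PeriodicStructure) (z : p.space) (L j : ℕ) (h : L ≤ j) :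
    z.1 L = z.1 j % p.m L := by
  induction j with
  | zero =>
    obtain rfl := Nat.le_zero.mp h
    exact (Nat.mod_eq_of_lt (z.2 0).1).symm
  | succ j ih =>
    rcases Nat.eq_or_lt_of_le h with rfl | h'
    · exact (Nat.mod_eq_of_lt (z.2 _).1).symm
    · have hLj : L ≤ j := Nat.lt_succ_iff.mp h'
      rw [ih hLj, ← (z.2 j).2]
      exact Nat.mod_mod_of_dvd _ (ps_m_dvd p L j hLj)

lemma cyl_diam {S : Set X} (p : PeriodicStructure) (h : p.space ≃ₜ S) :
    ∀ ε > (0:ℝ), ∃ j, ∀ z z' : p.space, z.1 j = z'.1 j →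
      dist ((h z : X)) ((h z' : X)) ≤ ε := by
  intro ε hε
  by_contra hcon
  push_neg at hcon
  haveI := ps_compactSpace p
  set A : ℕ → Set (p.space × p.space) := fun j =>
    {pr | pr.1.1 j = pr.2.1 j ∧ ε < dist ((h pr.1 : X)) ((h pr.2 : X))} with hA
  have hAne : ∀ j, (A j).Nonempty := by
    intro j
    obtain ⟨z, z', hzz, hd⟩ := hcon j
    exact ⟨(z, z'), hzz, hd⟩
  set K : ℕ → Set (p.space × p.space) := fun t => closure (⋃ j, ⋃ (_ : t ≤ j), A j) with hK
  have hKne : ∀ t, (K t).Nonempty := by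
    intro t
    obtain ⟨pr, hpr⟩ := hAne t
    exact ⟨pr, subset_closure (Set.mem_iUnion.mpr ⟨t, Set.mem_iUnion.mpr ⟨le_rfl, hpr⟩⟩)⟩
  have hKsub : ∀ t, K (t+1) ⊆ K t := by
    intro t
    apply closure_mono
    refine Set.iUnion_mono (fun j => ?_)
    exact Set.iUnion_subset (fun hj => Set.subset_iUnion_of_subset (by omega) (subset_refl _))
  obtain ⟨pr, hpr⟩ := IsCompact.nonempty_iInter_of_sequence_nonempty_isCompact_isClosed K
    hKsub hKne (isClosed_closure.isCompact) (fun t => isClosed_closure)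
  simp only [Set.mem_iInter] at hpr
  have hagree : ∀ L, pr.1.1 L = pr.2.1 L := by
    intro L
    have hcl : IsClosed {qr : p.space × p.space | qr.1.1 L = qr.2.1 L} := by
      have hc : Continuous (fun qr : p.space × p.space => ((qr.1.1 L, qr.2.1 L) : ℕ × ℕ)) :=
        Continuous.prodMk ((continuous_apply L).comp (continuous_subtype_val.comp continuous_fst))
          ((continuous_apply L).comp (continuous_subtype_val.comp continuous_snd))
      exact IsClosed.preimage hc (isClosed_discrete {pr : ℕ × ℕ | pr.1 = pr.2})
    have hsub : (⋃ j, ⋃ (_ : L ≤ j), A j) ⊆ {qr : p.space × p.space | qr.1.1 L = qr.2.1 L} := by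
      refine Set.iUnion_subset (fun j => Set.iUnion_subset (fun hj qr hqr => ?_))
      have h1 : qr.1.1 L = qr.1.1 j % p.m L := ps_coord_mod p qr.1 L j hj
      have h2 : qr.2.1 L = qr.2.1 j % p.m L := ps_coord_mod p qr.2 L j hj
      rw [Set.mem_setOf_eq, h1, h2, hqr.1]
    exact (hcl.closure_subset_iff.mpr hsub) (hpr L)
  have heq : pr.1 = pr.2 := Subtype.ext (funext hagree)
  have hdist : ε ≤ dist ((h pr.1 : X)) ((h pr.2 : X)) := by
    have hcl : IsClosed {qr : p.space × p.space | ε ≤ dist ((h qr.1 : X)) ((h qr.2 : X))} := by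
      have hc : Continuous (fun qr : p.space × p.space => dist ((h qr.1 : X)) ((h qr.2 : X))) := by
        apply Continuous.dist
        · exact continuous_subtype_val.comp (h.continuous.comp continuous_fst)
        · exact continuous_subtype_val.comp (h.continuous.comp continuous_snd)
      exact isClosed_le continuous_const hc
    have hsub : (⋃ j, ⋃ (_ : (0:ℕ) ≤ j), A j) ⊆
        {qr : p.space × p.space | ε ≤ dist ((h qr.1 : X)) ((h qr.2 : X))} :=
      Set.iUnion_subset (fun j => Set.iUnion_subset (fun hj qr hqr => le_of_lt hqr.2))
    exact (hcl.closure_subset_iff.mpr hsub) (hpr 0)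
  rw [heq] at hdist
  simp only [dist_self] at hdist
  linarith

lemma sync_period (hf : Continuous f) (y : X) (P : ℕ → Set X) (q : ℕ) (hq : 0 < q)
    (hcov : ∀ w ∈ omegaLimitPt f y, ∃ c < q, w ∈ P c)
    (hmap : ∀ c < q, ∀ w ∈ P c, f w ∈ P ((c+1) % q))
    (hcpt : ∀ c < q, IsCompact (P c))
    (hdisj : ∀ c < q, ∀ c' < q, c ≠ c' → Disjoint (P c) (P c'))
    (ε : ℝ) (hε : 0 < ε)
    (hdiam : ∀ c < q, ∀ a ∈ P c, ∀ b ∈ P c, dist a b ≤ ε/3) :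
    ∃ I, ∀ i ≥ I, ∀ k, dist (f^[i] y) (f^[i + k*q] y) ≤ ε := by
  obtain ⟨γ, hγ, hgap⟩ := pieces_gap P q hcpt hdisj
  obtain ⟨I, c₀, hc₀, key⟩ := sync hf y (omegaLimitPt f y) P q hq hcov hmap γ hγ hgap
    (omega_attract y) (ε/3) (by linarith)
  refine ⟨I, fun i hi k => ?_⟩
  obtain ⟨w₁, hw₁P, hw₁⟩ := key (i - I)
  obtain ⟨w₂, hw₂P, hw₂⟩ := key (i - I + k*q)
  have e1 : I + (i - I) = i := by omega
  have e2 : I + (i - I + k*q) = i + k*q := by omega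
  rw [e1] at hw₁
  rw [e2] at hw₂
  rw [← Nat.add_assoc, Nat.add_mul_mod_self_right] at hw₂P
  have hcq : (c₀ + (i - I)) % q < q := Nat.mod_lt _ hq
  have hd12 : dist w₁ w₂ ≤ ε/3 := hdiam _ hcq w₁ hw₁P w₂ hw₂P
  have hw₁' : dist (f^[i] y) w₁ ≤ ε/3 := hw₁.trans (min_le_left _ _)
  have hw₂' : dist (f^[i + k*q] y) w₂ ≤ ε/3 := hw₂.trans (min_le_left _ _)
  have ht1 := dist_triangle (f^[i] y) w₂ (f^[i + k*q] y)
  have ht2 := dist_triangle (f^[i] y) w₁ w₂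
  rw [dist_comm w₂ (f^[i + k*q] y)] at ht1
  linarith

lemma A_spec (hf : Continuous f) (y : X)
    (hA : IsPeriodicOrbit f (omegaLimitPt f y) ∨ IsOdometer f (omegaLimitPt f y)) :
    ∀ ε > (0:ℝ), ∃ n, 0 < n ∧ ∃ I, ∀ i ≥ I, ∀ k, dist (f^[i] y) (f^[i + k*n] y) ≤ ε := by
  intro ε hε
  rcases hA with ⟨w, hwS, i₀, hi₀pos, hper, hSeq⟩ | ⟨p, h, hconj⟩
  · -- periodic orbit case
    have hex : ∃ pp, 0 < pp ∧ f^[pp] w = w := ⟨i₀, hi₀pos, hper⟩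
    classical
    set q := Nat.find hex with hqdef
    have hq : 0 < q := (Nat.find_spec hex).1
    have hqw : f^[q] w = w := (Nat.find_spec hex).2
    have hqle : q ≤ i₀ := Nat.find_min' hex ⟨hi₀pos, hper⟩
    have hmod : ∀ a, f^[a] w = f^[a % q] w := by
      intro a
      induction a using Nat.strong_induction_on with
      | _ a ih =>
        by_cases ha : a < q
        · rw [Nat.mod_eq_of_lt ha]
        · push_neg at ha
          have h1 : f^[a] w = f^[a - q] w := by
            conv_lhs => rw [show a = (a - q) + q by omega]
            rw [Function.iterate_add_apply, hqw]
          have h2 : (a - q) % q = a % q := by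
            conv_rhs => rw [show a = (a - q) + q by omega, Nat.add_mod_right]
          rw [h1, ih (a - q) (by omega), h2]
    have hinj : ∀ r < q, ∀ r' < q, f^[r] w = f^[r'] w → r = r' := by
      have haux : ∀ r r', r < r' → r' < q → f^[r] w = f^[r'] w → False := by
        intro r r' hrr' hr' heqw
        have h1 : f^[q - r' + r] w = w := by
          have h2 : f^[q - r'] (f^[r'] w) = w := by
            rw [← Function.iterate_add_apply]
            rw [show q - r' + r' = q by omega]
            exact hqw
          rw [← heqw] at h2
          rw [← Function.iterate_add_apply] at h2
          exact h2
        exact Nat.find_min hex (show q - r' + r < q by omega) ⟨by omega, h1⟩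
      intro r hr r' hr' heqw
      rcases Nat.lt_trichotomy r r' with hlt | heq | hgt
      · exact absurd (haux r r' hlt hr' heqw) (not_false)
      · exact heq
      · exact absurd (haux r' r hgt hr heqw.symm) (not_false)
    have hS2 : omegaLimitPt f y = {v | ∃ r < q, f^[r] w = v} := by
      rw [hSeq]
      ext v
      constructor
      · rintro ⟨jj, hjj, rfl⟩
        exact ⟨jj % q, Nat.mod_lt _ hq, (hmod jj).symm⟩
      · rintro ⟨r, hr, rfl⟩
        exact ⟨r, lt_of_lt_of_le hr hqle, rfl⟩
    refine ⟨q, hq, ?_⟩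
    apply sync_period hf y (fun c => {f^[c] w}) q hq
    · intro v hv
      rw [hS2] at hv
      obtain ⟨r, hr, rfl⟩ := hv
      exact ⟨r, hr, rfl⟩
    · intro c hc v hv
      rw [Set.mem_singleton_iff] at hv
      subst hv
      rw [Set.mem_singleton_iff, ← hmod (c+1), ← Function.iterate_succ_apply' f c w]
    · exact fun c _ => isCompact_singleton
    · intro c hc c' hc' hne
      rw [Set.disjoint_singleton]
      exact fun heqw => hne (hinj c hc c' hc' heqw)
    · exact hε
    · intro c hc a ha b hb
      rw [Set.mem_singleton_iff] at ha hb
      rw [ha, hb, dist_self]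
      linarith
  · -- odometer case
    haveI := ps_compactSpace p
    obtain ⟨j, hj⟩ := cyl_diam p h (ε/3) (by linarith)
    refine ⟨p.m j, p.pos j, ?_⟩
    apply sync_period hf y (fun c => (fun z : p.space => (h z : X)) '' {z | z.1 j = c}) (p.m j) (p.pos j)
    · intro v hv
      set z := h.symm ⟨v, hv⟩ with hz
      refine ⟨z.1 j, (z.2 j).1, z, rfl, ?_⟩
      show ((h (h.symm ⟨v, hv⟩) : X)) = v
      rw [Homeomorph.apply_symm_apply]
    · rintro c hc v ⟨z, hzj, rfl⟩
      refine ⟨p.step z, ?_, (hconj z).symm⟩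
      show (z.1 j + 1) % p.m j = (c + 1) % p.m j
      rw [hzj]
    · intro c hc
      apply IsCompact.image ?_ (continuous_subtype_val.comp h.continuous)
      apply IsClosed.isCompact
      show IsClosed ((fun z : p.space => z.1 j) ⁻¹' ({c} : Set ℕ))
      apply IsClosed.preimage ?_ (isClosed_discrete ({c} : Set ℕ))
      show Continuous ((fun x : ℕ → ℕ => x j) ∘ (fun z : p.space => z.1))
      exact (continuous_apply j).comp continuous_subtype_val
    · rintro c hc c' hc' hne
      rw [Set.disjoint_left]
      rintro a ⟨z, hzj, rfl⟩ ⟨z', hz'j, hvals⟩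
      apply hne
      have hzz : z' = z := h.injective (Subtype.ext hvals)
      rw [← hzj, ← hz'j, hzz]
    · exact hε
    · rintro c hc a ⟨z, hzj, rfl⟩ b ⟨z', hz'j, rfl⟩
      exact hj z z' (by rw [hzj, hz'j])

def GoodPer (f : X → X) (x : X) (ε : ℝ) (n : ℕ) : Prop :=
  0 < n ∧ ∃ I, ∀ i ≥ I, ∀ k, dist (f^[i] x) (f^[i + k*n] x) ≤ ε

def Aset (f : X → X) (n : ℕ) (u : X) : Set X := closure {v | ∃ k, f^[k*n] u = v}

lemma good_mul {x : X} {ε : ℝ} {n : ℕ} (hg : GoodPer f x ε n) {c : ℕ} (hc : 0 < c) :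
    GoodPer f x ε (c * n) := by
  obtain ⟨hn, I, hI⟩ := hg
  refine ⟨Nat.mul_pos hc hn, I, fun i hi k => ?_⟩
  have he : k * (c * n) = (k * c) * n := by ring
  rw [he]
  exact hI i hi (k * c)

lemma contAt (hf : Continuous f) (m : ℕ) (v : X) :
    ∀ η > (0:ℝ), ∃ δ > (0:ℝ), ∀ z, dist z v < δ → dist (f^[m] z) (f^[m] v) < η := by
  intro η hη
  obtain ⟨δ, hδ, hd⟩ := Metric.continuousAt_iff.mp ((hf.iterate m).continuousAt) η hη
  exact ⟨δ, hδ, fun z hz => hd hz⟩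

lemma good_omega (hf : Continuous f) {x u : X} {ε : ℝ} {n : ℕ} (hg : GoodPer f x ε n)
    (hu : u ∈ omegaLimitPt f x) (m k : ℕ) : dist (f^[m] u) (f^[m + k*n] u) ≤ ε := by
  obtain ⟨hn, I, hI⟩ := hg
  refine le_of_forall_pos_le_add (fun η hη => ?_)
  obtain ⟨δ₁, hδ₁, hd₁⟩ := contAt hf m u (η/2) (by linarith)
  obtain ⟨δ₂, hδ₂, hd₂⟩ := contAt hf (m + k*n) u (η/2) (by linarith)
  obtain ⟨i, hi, hdi⟩ := omega_char.mp hu (min δ₁ δ₂) (lt_min hδ₁ hδ₂) I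
  have h1 : dist (f^[m] (f^[i] x)) (f^[m] u) < η/2 :=
    hd₁ _ (lt_of_lt_of_le hdi (min_le_left _ _))
  have h2 : dist (f^[m + k*n] (f^[i] x)) (f^[m + k*n] u) < η/2 :=
    hd₂ _ (lt_of_lt_of_le hdi (min_le_right _ _))
  have h3 : dist (f^[i + m] x) (f^[(i + m) + k*n] x) ≤ ε := hI (i + m) (by omega) k
  rw [show i + m = m + i by omega, Function.iterate_add_apply] at h3
  rw [show m + i + k*n = (m + k*n) + i by omega, Function.iterate_add_apply] at h3
  have t1 := dist_triangle (f^[m] u) (f^[m] (f^[i] x)) (f^[m + k*n] u)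
  have t2 := dist_triangle (f^[m] (f^[i] x)) (f^[m + k*n] (f^[i] x)) (f^[m + k*n] u)
  rw [dist_comm (f^[m] u) (f^[m] (f^[i] x))] at t1
  linarith

lemma aset_mem_self (f : X → X) (n : ℕ) (u : X) : u ∈ Aset f n u :=
  subset_closure ⟨0, by simp⟩

lemma aset_closed (f : X → X) (n : ℕ) (u : X) : IsClosed (Aset f n u) := isClosed_closure

lemma aset_sub_omega (hf : Continuous f) {x u : X} (n : ℕ) (hu : u ∈ omegaLimitPt f x) :
    Aset f n u ⊆ omegaLimitPt f x := by
  apply closure_minimal ?_ (omega_closed (y := x))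
  rintro _ ⟨k, rfl⟩
  exact omega_iterate_mem hf hu (k*n)

lemma aset_dist (hf : Continuous f) {x u v : X} {ε : ℝ} {n : ℕ} (hg : GoodPer f x ε n)
    (hu : u ∈ omegaLimitPt f x) (hv : v ∈ Aset f n u) (m : ℕ) :
    dist (f^[m] u) (f^[m] v) ≤ ε := by
  refine le_of_forall_pos_le_add (fun η hη => ?_)
  obtain ⟨δ, hδ, hd⟩ := contAt hf m v η hη
  obtain ⟨b, ⟨k, rfl⟩, hb⟩ := Metric.mem_closure_iff.mp hv δ hδ
  rw [dist_comm] at hb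
  have h1 : dist (f^[m] (f^[k*n] u)) (f^[m] v) < η := hd _ hb
  have h2 : dist (f^[m] u) (f^[m + k*n] u) ≤ ε := good_omega hf hg hu m k
  rw [Function.iterate_add_apply] at h2
  have := dist_triangle (f^[m] u) (f^[m] (f^[k*n] u)) (f^[m] v)
  linarith

lemma aset_subset (hf : Continuous f) {u v : X} {n : ℕ} (hv : v ∈ Aset f n u) :
    Aset f n v ⊆ Aset f n u := by
  apply closure_minimal ?_ isClosed_closure
  rintro _ ⟨k, rfl⟩
  have h1 : f^[k*n] v ∈ f^[k*n] '' closure {v' | ∃ k', f^[k'*n] u = v'} := ⟨v, hv, rfl⟩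
  have h2 := (image_closure_subset_closure_image (hf.iterate (k*n))) h1
  refine closure_mono ?_ h2
  rintro _ ⟨_, ⟨k', rfl⟩, rfl⟩
  exact ⟨k + k', by rw [Nat.add_mul, Function.iterate_add_apply]⟩

lemma aset_symm (hf : Continuous f) {x u v : X} {n : ℕ} (hn : 0 < n)
    (hP : ∀ ε > (0:ℝ), ∃ n', GoodPer f x ε n')
    (hu : u ∈ omegaLimitPt f x) (hv : v ∈ Aset f n u) : u ∈ Aset f n v := by
  rw [Aset, Metric.mem_closure_iff]
  intro η hη
  obtain ⟨n₁, hg₁⟩ := hP (η/3) (by linarith)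
  have hgN : GoodPer f x (η/3) (n * n₁) := good_mul hg₁ hn
  set N := n * n₁ with hNdef
  have hNpos : 0 < N := hgN.1
  have hnN : n ∣ N := dvd_mul_right n n₁
  have happ : ∀ t : ℕ, ∃ kt, dist v (f^[kt*n] u) < 1/((t:ℝ)+1) := by
    intro t
    obtain ⟨b, ⟨kt, rfl⟩, hb⟩ := Metric.mem_closure_iff.mp hv _ (by positivity : (0:ℝ) < 1/((t:ℝ)+1))
    exact ⟨kt, hb⟩
  choose ks hks using happ
  obtain ⟨ρ, hρN, hfib⟩ := freq_fiber (g := fun t => (ks t * n) % N) (q := N)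
    (fun t => Nat.mod_lt _ hNpos)
  obtain ⟨t₁, -, hfib₁⟩ := hfib 0
  have hndvdρ : n ∣ ρ := by
    rw [← hfib₁]
    exact (Nat.dvd_mod_iff hnN).mpr (dvd_mul_left n (ks t₁))
  have hkey : ∀ m, dist (f^[ρ + m] u) (f^[m] v) ≤ η/3 := by
    intro m
    refine le_of_forall_pos_le_add (fun ζ hζ => ?_)
    obtain ⟨δ, hδ, hd⟩ := contAt hf m v ζ hζ
    obtain ⟨T, hT⟩ := exists_nat_one_div_lt hδ
    obtain ⟨t, ht, hfibt⟩ := hfib T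
    have hdt : dist v (f^[ks t * n] u) < δ := by
      refine lt_of_lt_of_le (hks t) (le_trans ?_ hT.le)
      apply one_div_le_one_div_of_le (by positivity)
      have : (T:ℝ) ≤ t := by exact_mod_cast ht
      linarith
    have hρle : ρ ≤ ks t * n := by
      rw [← hfibt]; exact Nat.mod_le _ _
    have hmodeq : ρ % N = (ks t * n) % N := by
      rw [hfibt, Nat.mod_eq_of_lt hρN]
    obtain ⟨c, hc⟩ := (Nat.modEq_iff_dvd' hρle).mp hmodeq
    have ha : ks t * n = N*c + ρ := (Nat.sub_eq_iff_eq_add hρle).mp hc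
    have h1 : dist (f^[ρ + m] u) (f^[(ρ + m) + c*N] u) ≤ η/3 := good_omega hf hgN hu (ρ+m) c
    rw [show (ρ + m) + c*N = m + (ks t * n) by rw [ha]; ring] at h1
    rw [Function.iterate_add_apply f m (ks t * n) u] at h1
    have h2 : dist (f^[m] (f^[ks t * n] u)) (f^[m] v) < ζ := by
      rw [dist_comm] at hdt
      exact hd _ hdt
    have := dist_triangle (f^[ρ + m] u) (f^[m] (f^[ks t * n] u)) (f^[m] v)
    linarith
  have hret : dist u (f^[(ρ+1)*N] u) ≤ η/3 := by
    have := good_omega hf hgN hu 0 (ρ+1)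
    simpa using this
  have hdvd2 : n ∣ (ρ+1)*N - ρ := Nat.dvd_sub (Dvd.dvd.mul_left hnN (ρ+1)) hndvdρ
  obtain ⟨k', hk'⟩ := hdvd2
  have hρle2 : ρ ≤ (ρ+1)*N := by
    calc ρ ≤ ρ + 1 := by omega
    _ ≤ (ρ+1)*N := Nat.le_mul_of_pos_right _ hNpos
  have ha2 : (ρ+1)*N = n*k' + ρ := (Nat.sub_eq_iff_eq_add hρle2).mp hk'
  refine ⟨f^[k'*n] v, ⟨k', rfl⟩, ?_⟩
  have h3 : dist (f^[ρ + k'*n] u) (f^[k'*n] v) ≤ η/3 := hkey (k'*n)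
  rw [show ρ + k'*n = (ρ+1)*N by rw [ha2]; ring] at h3
  have := dist_triangle u (f^[(ρ+1)*N] u) (f^[k'*n] v)
  linarith

lemma aset_eq (hf : Continuous f) {x u v : X} {n : ℕ} (hn : 0 < n)
    (hP : ∀ ε > (0:ℝ), ∃ n', GoodPer f x ε n')
    (hu : u ∈ omegaLimitPt f x) (hv : v ∈ Aset f n u) : Aset f n u = Aset f n v :=
  Set.Subset.antisymm (aset_subset hf (aset_symm hf hn hP hu hv)) (aset_subset hf hv)

lemma aset_step (hf : Continuous f) {u v : X} {n : ℕ} (hv : v ∈ Aset f n u) :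
    f v ∈ Aset f n (f u) := by
  have h1 : f v ∈ f '' closure {v' | ∃ k, f^[k*n] u = v'} := ⟨v, hv, rfl⟩
  have h2 := (image_closure_subset_closure_image hf) h1
  refine closure_mono ?_ h2
  rintro _ ⟨_, ⟨k, rfl⟩, rfl⟩
  refine ⟨k, ?_⟩
  rw [← Function.iterate_succ_apply f (k*n) u, Function.iterate_succ_apply' f (k*n) u]

lemma aset_iterate (hf : Continuous f) {u v : X} {n : ℕ} (hv : v ∈ Aset f n u) (m : ℕ) :
    f^[m] v ∈ Aset f n (f^[m] u) := by
  induction m with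
  | zero => simpa using hv
  | succ m ih =>
    rw [Function.iterate_succ_apply' f m v, Function.iterate_succ_apply' f m u]
    exact aset_step hf ih

lemma orbit_shadow (hf : Continuous f) {x u : X} {ε : ℝ} {n : ℕ} (hg : GoodPer f x ε n)
    (hu : u ∈ omegaLimitPt f x) (I₀ : ℕ) :
    ∃ i ≥ I₀, ∀ ℓ, dist (f^[i + ℓ] x) (f^[ℓ] u) ≤ ε := by
  obtain ⟨hn, I, hI⟩ := hg
  have happ : ∀ t : ℕ, ∃ it, it ≥ max I (max I₀ t) ∧ dist (f^[it] x) u < 1/((t:ℝ)+1) := by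
    intro t
    obtain ⟨i, hi, hd⟩ := omega_char.mp hu _ (by positivity : (0:ℝ) < 1/((t:ℝ)+1)) (max I (max I₀ t))
    exact ⟨i, hi, hd⟩
  choose it hit hdit using happ
  obtain ⟨r, hrn, hfib⟩ := freq_fiber (g := fun t => it t % n) (q := n) (fun t => Nat.mod_lt _ hn)
  obtain ⟨t₀, -, hfib₀⟩ := hfib 0
  have hiI : it t₀ ≥ I := le_trans (le_max_left _ _) (hit t₀)
  refine ⟨it t₀, le_trans (le_trans (le_max_left I₀ t₀) (le_max_right I _)) (hit t₀), fun ℓ => ?_⟩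
  refine le_of_forall_pos_le_add (fun ζ hζ => ?_)
  obtain ⟨δ, hδ, hd⟩ := contAt hf ℓ u ζ hζ
  obtain ⟨T, hT⟩ := exists_nat_one_div_lt hδ
  obtain ⟨t, ht, hfibt⟩ := hfib (max T (it t₀))
  have htT : t ≥ T := le_trans (le_max_left _ _) ht
  have htit : it t ≥ it t₀ := le_trans (le_trans (le_max_right T _) ht)
    (le_trans (le_max_right I₀ t) (le_trans (le_max_right I _) (hit t)))
  have hdt : dist (f^[it t] x) u < δ := by
    refine lt_of_lt_of_le (hdit t) (le_trans ?_ hT.le)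
    apply one_div_le_one_div_of_le (by positivity)
    have : (T:ℝ) ≤ t := by exact_mod_cast htT
    linarith
  have hmodeq : it t₀ % n = it t % n := by rw [hfib₀, hfibt]
  obtain ⟨c, hc⟩ := (Nat.modEq_iff_dvd' htit).mp hmodeq
  have ha : it t = n*c + it t₀ := (Nat.sub_eq_iff_eq_add htit).mp hc
  have h1 : dist (f^[it t₀ + ℓ] x) (f^[(it t₀ + ℓ) + c*n] x) ≤ ε := hI (it t₀ + ℓ) (by omega) c
  rw [show (it t₀ + ℓ) + c*n = ℓ + it t by rw [ha]; ring] at h1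
  rw [Function.iterate_add_apply f ℓ (it t) x] at h1
  have h2 : dist (f^[ℓ] (f^[it t] x)) (f^[ℓ] u) < ζ := hd _ hdt
  have := dist_triangle (f^[it t₀ + ℓ] x) (f^[ℓ] (f^[it t] x)) (f^[ℓ] u)
  linarith

lemma omega_trans (hf : Continuous f) {x u v : X} {ε : ℝ} {n : ℕ} (hg : GoodPer f x ε n)
    (hu : u ∈ omegaLimitPt f x) (hv : v ∈ omegaLimitPt f x) :
    ∃ m, dist (f^[m] u) v ≤ 2*ε := by
  obtain ⟨i₁, hi₁, h₁⟩ := orbit_shadow hf hg hu 0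
  obtain ⟨i₂, hi₂, h₂⟩ := orbit_shadow hf hg hv i₁
  refine ⟨i₂ - i₁, ?_⟩
  have e1 : i₁ + (i₂ - i₁) = i₂ := by omega
  have ha := h₁ (i₂ - i₁)
  rw [e1] at ha
  have hb := h₂ 0
  simp only [Nat.add_zero, Function.iterate_zero_apply] at hb
  have := dist_triangle (f^[i₂ - i₁] u) (f^[i₂] x) v
  rw [dist_comm (f^[i₂ - i₁] u) (f^[i₂] x)] at this
  linarith

lemma thmB (hf : Continuous f) (x : X)
    (hP : ∀ ε > (0:ℝ), ∃ n, GoodPer f x ε n) :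
    IsPeriodicOrbit f (omegaLimitPt f x) ∨ IsOdometer f (omegaLimitPt f x) := by
  classical
  obtain ⟨u₀, hu₀⟩ := omega_nonempty (f := f) (y := x)
  have hP' : ∀ ε > (0:ℝ), ∃ n', GoodPer f x ε n' := hP
  have hPj : ∀ j : ℕ, ∃ n, GoodPer f x (1/((j:ℝ)+1)) n := fun j => hP _ (by positivity)
  choose g hg using hPj
  have hgpos : ∀ j, 0 < g j := fun j => (hg j).1
  set N : ℕ → ℕ := fun j => Nat.rec (g 0) (fun j' prev => prev * g (j'+1)) j with hNdef
  have hNs : ∀ j, N (j+1) = N j * g (j+1) := fun j => rfl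
  have hNpos : ∀ j, 0 < N j := by
    intro j
    induction j with
    | zero => exact hgpos 0
    | succ j ih => rw [hNs]; exact Nat.mul_pos ih (hgpos (j+1))
  have hNgood : ∀ j : ℕ, GoodPer f x (1/((j:ℝ)+1)) (N j) := by
    intro j
    cases j with
    | zero => exact hg 0
    | succ j => rw [hNs]; exact good_mul (hg (j+1)) (hNpos j)
  have hNdvd : ∀ j, N j ∣ N (j+1) := fun j => by rw [hNs]; exact dvd_mul_right _ _
  have hAmono : ∀ {n n' : ℕ}, n ∣ n' → ∀ u : X, Aset f n' u ⊆ Aset f n u := by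
    intro n n' hd u
    obtain ⟨c, rfl⟩ := hd
    apply closure_mono
    rintro _ ⟨k, rfl⟩
    exact ⟨k*c, by rw [show k*c*n = k*(n*c) by ring]⟩
  set C : ℕ → ℕ → Set X := fun j r => Aset f (N j) (f^[r] u₀) with hCdef
  have hCr_omega : ∀ r, f^[r] u₀ ∈ omegaLimitPt f x := fun r => omega_iterate_mem hf hu₀ r
  have hCsub : ∀ j r, C j r ⊆ omegaLimitPt f x := fun j r => aset_sub_omega hf _ (hCr_omega r)
  have hCself : ∀ j r, f^[r] u₀ ∈ C j r := fun j r => aset_mem_self f _ _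
  have hCclosed : ∀ j r, IsClosed (C j r) := fun j r => aset_closed f _ _
  have hCdiam : ∀ j r, ∀ a ∈ C j r, ∀ b ∈ C j r, dist a b ≤ 2*(1/((j:ℝ)+1)) := by
    intro j r a ha b hb
    have h1 := aset_dist hf (hNgood j) (hCr_omega r) ha 0
    have h2 := aset_dist hf (hNgood j) (hCr_omega r) hb 0
    simp only [Function.iterate_zero_apply] at h1 h2
    have h3 := dist_triangle a (f^[r] u₀) b
    rw [dist_comm a (f^[r] u₀)] at h3
    linarith
  have hpex : ∀ j, ∃ pp, 0 < pp ∧ f^[pp] u₀ ∈ Aset f (N j) u₀ := by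
    intro j
    exact ⟨N j, hNpos j, subset_closure ⟨1, by rw [Nat.one_mul]⟩⟩
  obtain ⟨Pd, hPdspec⟩ : ∃ Pd : ℕ → ℕ, ∀ j, (0 < Pd j ∧ f^[Pd j] u₀ ∈ Aset f (N j) u₀) ∧
      ∀ r, 0 < r → r < Pd j → f^[r] u₀ ∉ Aset f (N j) u₀ :=
    ⟨fun j => Nat.find (hpex j), fun j => ⟨Nat.find_spec (hpex j),
      fun r hr hrP hmem => Nat.find_min (hpex j) hrP ⟨hr, hmem⟩⟩⟩
  have hPdpos : ∀ j, 0 < Pd j := fun j => (hPdspec j).1.1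
  have hPdmem : ∀ j, f^[Pd j] u₀ ∈ Aset f (N j) u₀ := fun j => (hPdspec j).1.2
  have hPdmin : ∀ j r, 0 < r → r < Pd j → f^[r] u₀ ∉ Aset f (N j) u₀ := fun j => (hPdspec j).2
  have hCshift : ∀ j m, C j (m + Pd j) = C j m := by
    intro j m
    have h2 : f^[m + Pd j] u₀ = f^[m] (f^[Pd j] u₀) := Function.iterate_add_apply f m (Pd j) u₀
    show Aset f (N j) (f^[m + Pd j] u₀) = Aset f (N j) (f^[m] u₀)
    rw [h2]
    have h4 : f^[m] (f^[Pd j] u₀) ∈ Aset f (N j) (f^[m] u₀) := aset_iterate hf (hPdmem j) m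
    exact (aset_eq hf (hNpos j) hP' (hCr_omega m) h4).symm
  have hCmod : ∀ j a, C j a = C j (a % Pd j) := by
    intro j a
    induction a using Nat.strong_induction_on with
    | _ a ih =>
      by_cases ha : a < Pd j
      · rw [Nat.mod_eq_of_lt ha]
      · push_neg at ha
        have h2 : (a - Pd j) % Pd j = a % Pd j := by
          conv_rhs => rw [show a = (a - Pd j) + Pd j by omega, Nat.add_mod_right]
        calc C j a = C j ((a - Pd j) + Pd j) := by rw [Nat.sub_add_cancel ha]
          _ = C j (a - Pd j) := hCshift j (a - Pd j)
          _ = C j ((a - Pd j) % Pd j) := ih (a - Pd j) (by have := hPdpos j; omega)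
          _ = C j (a % Pd j) := by rw [h2]
  have hC0 : ∀ j, C j 0 = Aset f (N j) u₀ := by
    intro j
    show Aset f (N j) (f^[0] u₀) = Aset f (N j) u₀
    rw [Function.iterate_zero_apply]
  have hdvd_iff : ∀ j a, f^[a] u₀ ∈ Aset f (N j) u₀ ↔ Pd j ∣ a := by
    intro j a
    constructor
    · intro hmem
      have h1 : Aset f (N j) u₀ = Aset f (N j) (f^[a] u₀) := aset_eq hf (hNpos j) hP' hu₀ hmem
      have h3 : f^[a % Pd j] u₀ ∈ C j (a % Pd j) := hCself j _
      rw [← hCmod j a] at h3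
      have h4 : f^[a % Pd j] u₀ ∈ Aset f (N j) u₀ := by
        rw [h1]; exact h3
      rcases Nat.eq_zero_or_pos (a % Pd j) with hz | hpos
      · exact Nat.dvd_of_mod_eq_zero hz
      · exact absurd h4 (hPdmin j _ hpos (Nat.mod_lt _ (hPdpos j)))
    · rintro ⟨c, rfl⟩
      have h3 : f^[Pd j * c] u₀ ∈ C j (Pd j * c) := hCself j _
      rw [hCmod j _, Nat.mul_mod_right, hC0 j] at h3
      exact h3
  have hCdisj : ∀ j, ∀ r < Pd j, ∀ r' < Pd j, r ≠ r' → ∀ a, a ∈ C j r → a ∈ C j r' → False := by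
    have haux : ∀ j r r', r < r' → r' < Pd j → ∀ a, a ∈ C j r → a ∈ C j r' → False := by
      intro j r r' hrr' hr' a har har'
      have h1 : C j r = Aset f (N j) a := aset_eq hf (hNpos j) hP' (hCr_omega r) har
      have h2 : C j r' = Aset f (N j) a := aset_eq hf (hNpos j) hP' (hCr_omega r') har'
      have h3 : C j r = C j r' := by rw [h1, h2]
      have h5 : f^[r'] u₀ ∈ C j r := by rw [h3]; exact hCself j r'
      have h6 := aset_iterate hf h5 (Pd j - r')
      rw [← Function.iterate_add_apply f (Pd j - r') r' u₀,
        Nat.sub_add_cancel hr'.le] at h6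
      rw [← Function.iterate_add_apply f (Pd j - r') r u₀] at h6
      have h7 : Aset f (N j) u₀ = Aset f (N j) (f^[Pd j] u₀) :=
        aset_eq hf (hNpos j) hP' hu₀ (hPdmem j)
      have h8 : C j ((Pd j - r') + r) = Aset f (N j) (f^[Pd j] u₀) :=
        aset_eq hf (hNpos j) hP' (hCr_omega _) h6
      have h9 : f^[(Pd j - r') + r] u₀ ∈ Aset f (N j) u₀ := by
        rw [h7, ← h8]; exact hCself j _
      exact hPdmin j _ (by omega) (by omega) h9
    intro j r hr r' hr' hne a har har'
    rcases Nat.lt_or_ge r r' with hlt | hge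
    · exact haux j r r' hlt hr' a har har'
    · exact haux j r' r (by omega) hr a har' har
  have hCcov : ∀ j, ∀ v ∈ omegaLimitPt f x, ∃ r, r < Pd j ∧ v ∈ C j r := by
    intro j v hv
    have happ : ∀ s : ℕ, ∃ ms, dist (f^[ms] u₀) v ≤ 2*(1/((s:ℝ)+1)) := by
      intro s
      exact omega_trans hf (hNgood s) hu₀ hv
    choose ms hms using happ
    obtain ⟨r, hrP, hfib⟩ := freq_fiber (g := fun s => ms s % Pd j) (q := Pd j)
      (fun s => Nat.mod_lt _ (hPdpos j))
    refine ⟨r, hrP, ?_⟩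
    rw [← (hCclosed j r).closure_eq, Metric.mem_closure_iff]
    intro η hη
    obtain ⟨T, hT⟩ := exists_nat_one_div_lt (show (0:ℝ) < η/2 by linarith)
    obtain ⟨s, hs, hfibs⟩ := hfib T
    refine ⟨f^[ms s] u₀, ?_, ?_⟩
    · have h1 : f^[ms s] u₀ ∈ C j (ms s) := hCself j _
      rw [hCmod j (ms s), hfibs] at h1
      exact h1
    · have h2 : dist (f^[ms s] u₀) v ≤ 2*(1/((s:ℝ)+1)) := hms s
      have h3 : 1/((s:ℝ)+1) ≤ 1/((T:ℝ)+1) := by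
        apply one_div_le_one_div_of_le (by positivity)
        have : (T:ℝ) ≤ s := by exact_mod_cast hs
        linarith
      rw [dist_comm]
      linarith
  have hCnest : ∀ j r, C (j+1) r ⊆ C j r := fun j r => hAmono (hNdvd j) _
  have hPddvd : ∀ j, Pd j ∣ Pd (j+1) := by
    intro j
    have h1 : f^[Pd (j+1)] u₀ ∈ Aset f (N j) u₀ := hAmono (hNdvd j) u₀ (hPdmem (j+1))
    exact (hdvd_iff j _).mp h1
  have hPdmono : Monotone Pd :=
    monotone_nat_of_le_succ (fun j => Nat.le_of_dvd (hPdpos _) (hPddvd j))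
  have huniq : ∀ a b : X, (∀ T : ℕ, ∃ j ≥ T, ∃ r, a ∈ C j r ∧ b ∈ C j r) → a = b := by
    intro a b h
    have hd : dist a b ≤ 0 := by
      refine le_of_forall_pos_le_add (fun ζ hζ => ?_)
      obtain ⟨T, hT⟩ := exists_nat_one_div_lt (show (0:ℝ) < ζ/2 by linarith)
      obtain ⟨j, hj, r, har, hbr⟩ := h T
      have h1 : dist a b ≤ 2*(1/((j:ℝ)+1)) := hCdiam j r a har b hbr
      have h2 : 1/((j:ℝ)+1) ≤ 1/((T:ℝ)+1) := by
        apply one_div_le_one_div_of_le (by positivity)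
        have : (T:ℝ) ≤ j := by exact_mod_cast hj
        linarith
      linarith
    exact dist_le_zero.mp hd
  by_cases hbdd : ∃ B, ∀ j, Pd j ≤ B
  · -- periodic orbit case
    left
    obtain ⟨B, hB⟩ := hbdd
    have hstab : ∃ j₀, ∀ j ≥ j₀, Pd j = Pd j₀ := by
      by_contra hcon
      push_neg at hcon
      have hgrow : ∀ c : ℕ, ∃ j, c + 1 ≤ Pd j := by
        intro c
        induction c with
        | zero => exact ⟨0, hPdpos 0⟩
        | succ c ih =>
          obtain ⟨j, hj⟩ := ih
          obtain ⟨j', hj', hne⟩ := hcon j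
          have hle : Pd j ≤ Pd j' := hPdmono hj'
          have hne' : Pd j' ≠ Pd j := hne
          exact ⟨j', by omega⟩
      obtain ⟨j, hj⟩ := hgrow B
      have := hB j
      omega
    obtain ⟨j₀, hj₀⟩ := hstab
    set q := Pd j₀ with hqdef
    have hq : 0 < q := hPdpos j₀
    have hzx : ∀ r : ℕ, ∃ zz : X, ∀ t : ℕ, zz ∈ C (j₀ + t) r := by
      intro r
      obtain ⟨zz, hzz⟩ := IsCompact.nonempty_iInter_of_sequence_nonempty_isCompact_isClosed
        (fun t => C (j₀ + t) r) (fun t => hCnest (j₀ + t) r) (fun t => ⟨_, hCself _ r⟩)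
        ((hCclosed _ _).isCompact) (fun t => hCclosed _ _)
      exact ⟨zz, fun t => Set.mem_iInter.mp hzz t⟩
    choose z hz using hzx
    have hzuniq : ∀ (r : ℕ) (a : X), (∀ t : ℕ, a ∈ C (j₀ + t) r) → a = z r := by
      intro r a ha
      apply huniq
      intro T
      exact ⟨j₀ + T, by omega, r, ha T, hz r T⟩
    have hstep : ∀ r, r < q → f (z r) = z ((r+1) % q) := by
      intro r hr
      apply hzuniq
      intro t
      have h2 : f (z r) ∈ C (j₀ + t) (r + 1) := by
        have h3 := aset_step hf (hz r t)
        rw [← Function.iterate_succ_apply' f r u₀] at h3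
        exact h3
      rw [hCmod (j₀ + t) (r+1), hj₀ (j₀ + t) (by omega)] at h2
      exact h2
    have hiter : ∀ s r, r < q → f^[s] (z r) = z ((r + s) % q) := by
      intro s
      induction s with
      | zero => intro r hr; simp [Nat.mod_eq_of_lt hr]
      | succ s ih =>
        intro r hr
        rw [Function.iterate_succ_apply' f s (z r), ih r hr,
          hstep _ (Nat.mod_lt _ hq), Nat.mod_add_mod]
        rfl
    have hper : f^[q] (z 0) = z 0 := by
      have h1 := hiter q 0 hq
      rw [Nat.zero_add, Nat.mod_self] at h1
      exact h1
    have hz0mem : z 0 ∈ omegaLimitPt f x := hCsub j₀ 0 (hz 0 0)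
    refine ⟨z 0, hz0mem, q, hq, hper, ?_⟩
    ext v
    simp only [Set.mem_setOf_eq]
    constructor
    · intro hv
      have hr : ∀ t : ℕ, ∃ r, r < q ∧ v ∈ C (j₀ + t) r := by
        intro t
        obtain ⟨r, hrP, hvr⟩ := hCcov (j₀ + t) v hv
        rw [hj₀ (j₀ + t) (by omega)] at hrP
        exact ⟨r, hrP, hvr⟩
      choose rr hrr1 hrr2 using hr
      have hconst : ∀ t, rr t = rr 0 := by
        intro t
        induction t with
        | zero => rfl
        | succ t ih =>
          have h1 : v ∈ C (j₀ + t) (rr (t+1)) := hCnest (j₀ + t) _ (hrr2 (t+1))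
          by_cases he : rr (t+1) = rr t
          · rw [he, ih]
          · exact absurd (hCdisj (j₀+t) (rr (t+1))
              (by rw [hj₀ (j₀+t) (by omega)]; exact hrr1 _) (rr t)
              (by rw [hj₀ (j₀+t) (by omega)]; exact hrr1 t) he v h1 (hrr2 t)) not_false
      have hvz : v = z (rr 0) := by
        apply hzuniq
        intro t
        have h1 := hrr2 t
        rw [hconst t] at h1
        exact h1
      refine ⟨rr 0, hrr1 0, ?_⟩
      rw [hiter (rr 0) 0 hq, Nat.zero_add, Nat.mod_eq_of_lt (hrr1 0)]
      exact hvz.symm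
    · rintro ⟨jj, hjj, rfl⟩
      rw [hiter jj 0 hq]
      exact hCsub j₀ _ (hz _ 0)
  · -- odometer case
    right
    push_neg at hbdd
    have htend : Filter.Tendsto Pd Filter.atTop Filter.atTop :=
      tendsto_atTop_atTop_of_monotone hPdmono
        (fun b => by obtain ⟨j, hj⟩ := hbdd b; exact ⟨j, hj.le⟩)
    set P : PeriodicStructure := ⟨Pd, hPdpos, hPddvd, htend⟩ with hPdef
    haveI : CompactSpace P.space := ps_compactSpace P
    have hthread : ∀ (a : P.space) (j : ℕ), C (j+1) (a.1 (j+1)) ⊆ C j (a.1 j) := by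
      intro a j
      refine Set.Subset.trans (hAmono (hNdvd j) _) ?_
      have hcomp : a.1 (j+1) % Pd j = a.1 j := (a.2 j).2
      have heq : C j (a.1 (j+1)) = C j (a.1 j) := by
        rw [hCmod j (a.1 (j+1)), hcomp]
      exact heq.le
    have hptx : ∀ a : P.space, ∃ v : X, ∀ j, v ∈ C j (a.1 j) := by
      intro a
      obtain ⟨v, hv⟩ := IsCompact.nonempty_iInter_of_sequence_nonempty_isCompact_isClosed
        (fun j => C j (a.1 j)) (hthread a) (fun j => ⟨_, hCself j (a.1 j)⟩)
        ((hCclosed 0 (a.1 0)).isCompact) (fun j => hCclosed j (a.1 j))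
      exact ⟨v, fun j => Set.mem_iInter.mp hv j⟩
    choose pt hpt using hptx
    have hptΩ : ∀ a, pt a ∈ omegaLimitPt f x := fun a => hCsub 0 _ (hpt a 0)
    have hptuniq : ∀ (a : P.space) (v : X), (∀ j, v ∈ C j (a.1 j)) → v = pt a := by
      intro a v hv
      apply huniq
      intro T
      exact ⟨T, le_rfl, a.1 T, hv T, hpt a T⟩
    set toF : P.space → ↥(omegaLimitPt f x) := fun a => ⟨pt a, hptΩ a⟩ with htoF
    have hinj : Function.Injective toF := by
      intro a b hab
      have he : pt a = pt b := congrArg Subtype.val hab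
      apply Subtype.ext
      funext j
      by_contra hne
      have h1 : a.1 j < Pd j := (a.2 j).1
      have h2 : b.1 j < Pd j := (b.2 j).1
      exact hCdisj j (a.1 j) h1 (b.1 j) h2 hne (pt a) (hpt a j) (he ▸ hpt b j)
    have hsurj : Function.Surjective toF := by
      intro v
      have h1 : ∀ j, ∃ r, r < Pd j ∧ v.1 ∈ C j r := fun j => hCcov j v.1 v.2
      choose rr hrr1 hrr2 using h1
      have hcompat : ∀ j, rr (j+1) % Pd j = rr j := by
        intro j
        have h2 : v.1 ∈ C j (rr (j+1) % Pd j) := by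
          have h3 := hAmono (hNdvd j) (f^[rr (j+1)] u₀) (hrr2 (j+1))
          have h4 : (Aset f (N j) (f^[rr (j+1)] u₀)) = C j (rr (j+1) % Pd j) := by
            rw [← hCmod j (rr (j+1))]
          rw [h4] at h3
          exact h3
        by_contra hne
        exact hCdisj j _ (Nat.mod_lt _ (hPdpos j)) (rr j) (hrr1 j) hne v.1 h2 (hrr2 j)
      refine ⟨⟨rr, fun j => ⟨hrr1 j, hcompat j⟩⟩, ?_⟩
      apply Subtype.ext
      show pt _ = v.1
      exact (hptuniq _ v.1 (fun j => hrr2 j)).symm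
    have hcont : Continuous toF := by
      rw [continuous_iff_continuousAt]
      intro a
      have hten : Filter.Tendsto toF (nhds a) (nhds (toF a)) := by
        apply Metric.tendsto_nhds.mpr
        intro ε hε
        obtain ⟨T, hT⟩ := exists_nat_one_div_lt (show (0:ℝ) < ε/4 by linarith)
        have hopen : IsOpen {b : P.space | b.1 T = a.1 T} := by
          show IsOpen ((fun b : P.space => b.1 T) ⁻¹' ({a.1 T} : Set ℕ))
          apply IsOpen.preimage ?_ (isOpen_discrete _)
          show Continuous ((fun w : ℕ → ℕ => w T) ∘ (fun b : P.space => b.1))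
          exact (continuous_apply T).comp continuous_subtype_val
        apply Filter.eventually_of_mem (hopen.mem_nhds (by exact rfl))
        intro b hb
        rw [Subtype.dist_eq]
        have h1 : pt b ∈ C T (a.1 T) := by
          have h2 := hpt b T
          rw [hb] at h2
          exact h2
        have h3 : dist (pt b) (pt a) ≤ 2*(1/((T:ℝ)+1)) := hCdiam T _ _ h1 _ (hpt a T)
        show dist (pt b) (pt a) < ε
        linarith
      exact hten
    set e : P.space ≃ ↥(omegaLimitPt f x) := Equiv.ofBijective toF ⟨hinj, hsurj⟩ with hedef
    have hecont : Continuous (e : P.space → ↥(omegaLimitPt f x)) := hcont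
    set hom : P.space ≃ₜ ↥(omegaLimitPt f x) := hecont.homeoOfEquivCompactToT2 with hhomdef
    refine ⟨P, hom, fun zz => ?_⟩
    have hL : ((hom zz : ↥(omegaLimitPt f x)) : X) = pt zz := rfl
    have hR : ((hom (P.step zz) : ↥(omegaLimitPt f x)) : X) = pt (P.step zz) := rfl
    rw [hL, hR]
    apply hptuniq
    intro j
    have h1 : f (pt zz) ∈ C j (zz.1 j + 1) := by
      have h2 := aset_step hf (hpt zz j)
      rw [← Function.iterate_succ_apply' f (zz.1 j) u₀] at h2
      exact h2
    rw [hCmod j (zz.1 j + 1)] at h1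
    exact h1

end Aux

theorem mem_A_of_equicontinuous_at_closure {X : Type*} [MetricSpace X] [CompactSpace X]
    (f : X → X) (hf : Continuous f) (x : X)
    (heq : ∀ ε > (0 : ℝ), ∃ δ > (0 : ℝ), ∀ y : X, dist x y ≤ δ →
      ∀ i : ℕ, dist (f^[i] x) (f^[i] y) ≤ ε)
    (hx : x ∈ closure {y : X |
      IsPeriodicOrbit f (omegaLimitPt f y) ∨ IsOdometer f (omegaLimitPt f y)}) :
    IsPeriodicOrbit f (omegaLimitPt f x) ∨ IsOdometer f (omegaLimitPt f x) := by
  apply thmB hf x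
  intro ε hε
  obtain ⟨δ, hδ, hδp⟩ := heq (ε/3) (by linarith)
  obtain ⟨y, hyA, hxy⟩ := Metric.mem_closure_iff.mp hx δ hδ
  have hdist : ∀ i : ℕ, dist (f^[i] x) (f^[i] y) ≤ ε/3 := fun i => hδp y hxy.le i
  obtain ⟨n, hn, I, hI⟩ := A_spec hf y hyA (ε/3) (by linarith)
  refine ⟨n, hn, I, fun i hi k => ?_⟩
  have h1 := hdist i
  have h2 := hdist (i + k*n)
  have h3 := hI i hi k
  have t1 := dist_triangle (f^[i] x) (f^[i] y) (f^[i + k*n] x)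
  have t2 := dist_triangle (f^[i] y) (f^[i + k*n] y) (f^[i + k*n] x)
  rw [dist_comm (f^[i + k*n] y) (f^[i + k*n] x)] at t2
  linarith
end

section
/- Let f : X → X be a continuous self-map of a compact metric space with the shadowing property. Then the set 𝔸(f) = {x ∈ X : ω(x,f) is a periodic orbit or an odometer} is dense in X. -/
open Filter Topology Metric Set

/-!
Shadowing turns an approximate return of an orbit into a true orbit that is almost periodic from
some time on: close the return up into a periodic pseudo-orbit and shadow it. Iterating this with
errors `ε / 2 ^ (k + 1)`, and looking for each new return among times that differ by multiples of
the previous period, gives points `Y k → y` with `dist x y ≤ ε` whose orbits are almost periodic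
along periods `m k ∣ m (k + 1)`, `m k → ∞`; in the limit the orbit of `y` is asymptotically
periodic along every `m k`. Limits of `f^[t] y` over times `t ≡ g k [MOD m k]` then define a
continuous map `φ` from the odometer `X_m` onto `ω(y)` with `φ ∘ g_m = f ∘ φ`. Its fibres are the
cosets of a closed subgroup of the group `X_m`, and such a subgroup is cut out by a divisor chain
`e k ∣ m k`, so `ω(y)` is conjugate to the odometer `X_e` when `e k → ∞` and is a periodic orbit
otherwise.
-/

namespace PeriodicStructure

lemma m_dvd_m (p : PeriodicStructure) {j k : ℕ} (h : j ≤ k) : p.m j ∣ p.m k :=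
  Nat.rel_of_forall_rel_succ_of_le (· ∣ ·) p.dvd h

variable {p : PeriodicStructure}

lemma space_ext {x y : p.space} (h : ∀ j, x.1 j = y.1 j) : x = y := Subtype.ext (funext h)

lemma val_lt (x : p.space) (j : ℕ) : x.1 j < p.m j := (x.2 j).1

lemma val_mod_m (x : p.space) {j k : ℕ} (h : j ≤ k) : x.1 k % p.m j = x.1 j := by
  induction k, h using Nat.le_induction with
  | base => exact Nat.mod_eq_of_lt (val_lt x j)
  | succ k hjk ih => rw [← Nat.mod_mod_of_dvd _ (p.m_dvd_m hjk), (x.2 k).2, ih]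

lemma val_modEq (x : p.space) {j k : ℕ} (h : j ≤ k) : x.1 j ≡ x.1 k [MOD p.m j] := by
  rw [Nat.ModEq, val_mod_m x h, Nat.mod_eq_of_lt (val_lt x j)]

lemma step_iterate_val (x : p.space) (c j : ℕ) : (p.step^[c] x).1 j = (x.1 j + c) % p.m j := by
  induction c with
  | zero => exact (Nat.mod_eq_of_lt (val_lt x j)).symm
  | succ c ih =>
    rw [Function.iterate_succ_apply']
    change ((p.step^[c] x).1 j + 1) % p.m j = _
    rw [ih, Nat.mod_add_mod, add_assoc]

lemma tendsto_nhds_iff {α : Type*} {l : Filter α} {u : α → p.space} {x : p.space} :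
    Tendsto u l (𝓝 x) ↔ ∀ j, ∀ᶠ a in l, (u a).1 j = x.1 j := by
  refine tendsto_subtype_rng.trans (tendsto_pi_nhds.trans ?_)
  simp only [nhds_discrete, tendsto_pure]

instance : CompactSpace p.space := by
  have hclosed : IsClosed {x : ℕ → ℕ | ∀ j, x j < p.m j ∧ x (j + 1) % p.m j = x j} := by
    rw [Set.ofPred_forall]
    refine isClosed_iInter fun j => ?_
    have hc : Continuous fun x : ℕ → ℕ => (x j, x (j + 1)) := by fun_prop
    exact (isClosed_discrete {q : ℕ × ℕ | q.1 < p.m j ∧ q.2 % p.m j = q.1}).preimage hc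
  exact isCompact_iff_compactSpace.1 <| (isCompact_univ_pi fun j =>
    (Set.finite_Iio (p.m j)).isCompact).of_isClosed_subset hclosed fun x hx j _ => (hx j).1

instance : T2Space p.space :=
  inferInstanceAs (T2Space {x : ℕ → ℕ // ∀ j, x j < p.m j ∧ x (j + 1) % p.m j = x j})

section Group

def toZMod (x : p.space) (j : ℕ) : ZMod (p.m j) := x.1 j

lemma toZMod_injective : Function.Injective (toZMod (p := p)) := fun x y h =>
  space_ext fun j => by
    have := (ZMod.natCast_eq_natCast_iff' _ _ _).1 (congrFun h j)
    rwa [Nat.mod_eq_of_lt (val_lt x j), Nat.mod_eq_of_lt (val_lt y j)] at this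

instance : Zero p.space := ⟨⟨fun _ => 0, fun j => ⟨p.pos j, Nat.zero_mod _⟩⟩⟩

instance : Add p.space :=
  ⟨fun x y => ⟨fun j => (x.1 j + y.1 j) % p.m j, fun j => ⟨Nat.mod_lt _ (p.pos j), by
    rw [Nat.mod_mod_of_dvd _ (p.dvd j), Nat.add_mod, (x.2 j).2, (y.2 j).2]⟩⟩⟩

instance : Neg p.space :=
  ⟨fun x => ⟨fun j => (p.m j - x.1 j) % p.m j, fun j => ⟨Nat.mod_lt _ (p.pos j), by
    rw [Nat.mod_mod_of_dvd _ (p.dvd j), ← ZMod.natCast_eq_natCast_iff',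
      Nat.cast_sub (val_lt x _).le, Nat.cast_sub (val_lt x _).le, ZMod.natCast_self,
      (ZMod.natCast_eq_zero_iff _ _).2 (p.dvd j), ← ZMod.natCast_mod (x.1 (j + 1)), (x.2 j).2]⟩⟩⟩

lemma zero_val (j : ℕ) : (0 : p.space).1 j = 0 := rfl

lemma add_val (x y : p.space) (j : ℕ) : (x + y).1 j = (x.1 j + y.1 j) % p.m j := rfl

lemma toZMod_zero : toZMod (0 : p.space) = 0 := funext fun _ => Nat.cast_zero

lemma toZMod_add (x y : p.space) : toZMod (x + y) = toZMod x + toZMod y :=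
  funext fun j => by simp only [toZMod, add_val, ZMod.natCast_mod, Nat.cast_add, Pi.add_apply]

lemma toZMod_neg (x : p.space) : toZMod (-x) = -toZMod x := funext fun j => by
  change (((p.m j - x.1 j) % p.m j : ℕ) : ZMod (p.m j)) = -(x.1 j : ZMod (p.m j))
  rw [ZMod.natCast_mod, Nat.cast_sub (val_lt x j).le, ZMod.natCast_self, zero_sub]

instance : AddCommGroup p.space where
  add_assoc x y z := toZMod_injective <| by simp only [toZMod_add, add_assoc]
  zero_add x := toZMod_injective <| by simp only [toZMod_add, toZMod_zero, zero_add]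
  add_zero x := toZMod_injective <| by simp only [toZMod_add, toZMod_zero, add_zero]
  add_comm x y := toZMod_injective <| by simp only [toZMod_add, add_comm]
  neg_add_cancel x := toZMod_injective <| by
    simp only [toZMod_add, toZMod_neg, toZMod_zero, neg_add_cancel]
  nsmul := nsmulRec
  zsmul := zsmulRec

def coordHom (j : ℕ) : p.space →+ ZMod (p.m j) where
  toFun x := toZMod x j
  map_zero' := congrFun toZMod_zero j
  map_add' x y := congrFun (toZMod_add x y) j

lemma coordHom_apply (j : ℕ) (x : p.space) : coordHom j x = (x.1 j : ZMod (p.m j)) := rfl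

lemma step_iterate_eq_add (x : p.space) (c : ℕ) : p.step^[c] x = x + p.step^[c] 0 :=
  space_ext fun j => by
    rw [add_val, step_iterate_val, step_iterate_val, zero_val, zero_add, Nat.add_mod_mod]

lemma tendsto_step_iterate_zero (x : p.space) :
    Tendsto (fun k => p.step^[x.1 k] 0) atTop (𝓝 x) :=
  tendsto_nhds_iff.2 fun j => (eventually_ge_atTop j).mono fun k hk => by
    rw [step_iterate_val, zero_val, zero_add, val_mod_m x hk]

lemma exists_dvd_iff_exists_modEq (H : AddSubgroup p.space) (k : ℕ) :
    ∃ e : ℕ, ∀ c : ℕ, e ∣ c ↔ ∃ ν ∈ H, ν.1 k ≡ c [MOD p.m k] := by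
  obtain ⟨a, ha⟩ := Int.subgroup_cyclic ((H.map (coordHom k)).comap (Int.castAddHom _))
  refine ⟨a.natAbs, fun c => ?_⟩
  have hc := SetLike.ext_iff.1 ha (c : ℤ)
  rw [← AddSubgroup.zmultiples_eq_closure, Int.mem_zmultiples_iff, AddSubgroup.mem_comap,
    AddSubgroup.mem_map] at hc
  simp only [← Int.natCast_dvd_natCast, Int.natAbs_dvd, ← hc, Int.coe_castAddHom,
    Int.cast_natCast, coordHom_apply, ZMod.natCast_eq_natCast_iff]

theorem exists_dvd_chain_of_isClosed (H : AddSubgroup p.space)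
    (hH : IsClosed (H : Set p.space)) :
    ∃ e : ℕ → ℕ, (∀ k, e k ∣ p.m k) ∧ (∀ k, e k ∣ e (k + 1)) ∧
      ∀ ν, ν ∈ H ↔ ∀ k, e k ∣ ν.1 k := by
  choose e he using exists_dvd_iff_exists_modEq H
  refine ⟨e, fun k => (he k _).2 ⟨0, H.zero_mem, ?_⟩, fun k => ?_, fun ν => ⟨fun hν k =>
    (he k _).2 ⟨ν, hν, rfl⟩, fun hν => ?_⟩⟩
  · exact (Nat.modEq_zero_iff_dvd.2 dvd_rfl).symm
  · obtain ⟨ν, hν, hνe⟩ := (he (k + 1) _).1 dvd_rfl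
    exact (he k _).2 ⟨ν, hν, (val_modEq ν k.le_succ).trans (hνe.of_dvd (p.dvd k))⟩
  choose μ hμH hμ using fun k => (he k _).1 (hν k)
  have hμν : ∀ k, (μ k).1 k = ν.1 k := fun k => by
    rw [← Nat.mod_eq_of_lt (val_lt (μ k) k), hμ k, Nat.mod_eq_of_lt (val_lt ν k)]
  refine hH.mem_of_tendsto (tendsto_nhds_iff.2 fun j => ?_) (Eventually.of_forall (f := atTop) hμH)
  filter_upwards [eventually_ge_atTop j] with k hk
  rw [← val_mod_m _ hk, hμν, val_mod_m _ hk]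

lemma dvd_sub_val_iff_modEq {d k : ℕ} (hd : d ∣ p.m k) (g g' : p.space) :
    d ∣ (g - g').1 k ↔ g.1 k ≡ g'.1 k [MOD d] := by
  have hcast : ((g - g').1 k : ZMod d) = (g.1 k : ZMod d) - g'.1 k := by
    have h := map_sub (coordHom k) g g'
    rw [coordHom_apply, coordHom_apply, coordHom_apply] at h
    simpa only [map_sub, ZMod.castHom_apply, ZMod.cast_natCast hd] using
      congrArg (ZMod.castHom hd (ZMod d)) h
  rw [← ZMod.natCast_eq_zero_iff, hcast, sub_eq_zero, ZMod.natCast_eq_natCast_iff]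

end Group

section Reduce

variable {q : PeriodicStructure} (h : ∀ k, q.m k ∣ p.m k)

def reduce (x : p.space) : q.space :=
  ⟨fun k => x.1 k % q.m k, fun k => ⟨Nat.mod_lt _ (q.pos k), by
    change x.1 (k + 1) % q.m (k + 1) % q.m k = x.1 k % q.m k
    rw [Nat.mod_mod_of_dvd _ (q.dvd k), ← (x.2 k).2, Nat.mod_mod_of_dvd _ (h k)]⟩⟩

lemma reduce_eq_reduce_iff {x y : p.space} :
    reduce h x = reduce h y ↔ ∀ k, x.1 k ≡ y.1 k [MOD q.m k] :=
  ⟨fun hxy k => congrArg (fun z : q.space => z.1 k) hxy, fun hxy => space_ext hxy⟩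

lemma continuous_reduce : Continuous (reduce h) := continuous_iff_continuousAt.2 fun x =>
  tendsto_nhds_iff.2 fun k => (tendsto_nhds_iff.1 (tendsto_id (x := 𝓝 x)) k).mono fun _ hy =>
    congrArg (· % q.m k) hy

lemma reduce_zero : reduce h (0 : p.space) = 0 := space_ext fun _ => Nat.zero_mod _

lemma reduce_step (x : p.space) : reduce h (p.step x) = q.step (reduce h x) :=
  space_ext fun k => by
    change (x.1 k + 1) % p.m k % q.m k = (x.1 k % q.m k + 1) % q.m k
    rw [Nat.mod_mod_of_dvd _ (h k), Nat.mod_add_mod]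

lemma reduce_surjective : Function.Surjective (reduce h) := by
  have hrange : IsClosed (range (reduce h)) := (isCompact_range (continuous_reduce h)).isClosed
  intro w
  refine hrange.mem_of_tendsto (tendsto_step_iterate_zero w) (Eventually.of_forall fun k =>
    ⟨p.step^[w.1 k] 0, ?_⟩)
  rw [(Function.Semiconj.iterate_right (reduce_step h) _).eq, reduce_zero]

end Reduce

section Factor

variable {X : Type*} {f : X → X} {φ : p.space → X} {e : ℕ → ℕ}

lemma isPeriodicOrbit_range_of_bddAbove (hφf : Function.Semiconj φ p.step f)
    (hem : ∀ k, e k ∣ p.m k) (hee : ∀ k, e k ∣ e (k + 1))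
    (hφe : ∀ g g', φ g = φ g' ↔ ∀ k, g.1 k ≡ g'.1 k [MOD e k]) (hbdd : BddAbove (range e)) :
    IsPeriodicOrbit f (range φ) := by
  have hpos : ∀ k, 0 < e k := fun k => Nat.pos_of_dvd_of_pos (hem k) (p.pos k)
  obtain ⟨K, hK⟩ := Nat.sSup_mem (Set.range_nonempty e) hbdd
  have hmax : ∀ k, K ≤ k → e k = e K := fun k hk => le_antisymm (hK ▸ le_csSup hbdd ⟨k, rfl⟩)
    (Nat.le_of_dvd (hpos k) (Nat.rel_of_forall_rel_succ_of_le (· ∣ ·) hee hk))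
  have hdvd : ∀ k, e k ∣ e K := fun k => (le_total k K).elim
    (fun hk => Nat.rel_of_forall_rel_succ_of_le (· ∣ ·) hee hk) fun hk => (hmax k hk).dvd
  have hval : ∀ (x : p.space) k, x.1 k ≡ x.1 K [MOD e k] := fun x k => (le_total k K).elim
    (fun hk => (val_modEq x hk).of_dvd (hem k))
    fun hk => ((val_modEq x hk).of_dvd (hmax k hk ▸ hem K)).symm
  have horbit : ∀ c, φ (p.step^[c] 0) = f^[c] (φ 0) := fun c => (hφf.iterate_right c).eq 0
  refine ⟨φ 0, mem_range_self 0, e K, hpos K, ?_, Set.ext fun y => ⟨?_, ?_⟩⟩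
  · rw [← horbit, hφe]
    intro k
    rw [step_iterate_val, zero_val, zero_add]
    exact ((Nat.mod_modEq _ _).of_dvd (hem k)).trans (Nat.modEq_zero_iff_dvd.2 (hdvd k))
  · rintro ⟨x, rfl⟩
    refine ⟨x.1 K % e K, Nat.mod_lt _ (hpos K), ?_⟩
    rw [← horbit, hφe]
    intro k
    rw [step_iterate_val, zero_val, zero_add]
    exact ((Nat.mod_modEq _ _).of_dvd (hem k)).trans
      (((Nat.mod_modEq _ _).of_dvd (hdvd k)).trans (hval x k).symm)
  · rintro ⟨j, -, rfl⟩
    exact ⟨_, horbit j⟩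

variable [TopologicalSpace X] [T2Space X]

/-- Translating by `x` is the limit of translating by the integers `x.1 k`, which commute with
`φ`; hence the fibres of `φ` are invariant under all translations. -/
lemma map_add_eq_map_add (hφ : Continuous φ) (hφf : Function.Semiconj φ p.step f)
    {g g' : p.space} (h : φ g = φ g') (x : p.space) : φ (g + x) = φ (g' + x) := by
  have key : ∀ g : p.space, Tendsto (fun k => f^[x.1 k] (φ g)) atTop (𝓝 (φ (g + x))) := by
    intro g
    have hx : Tendsto (fun k => g + p.step^[x.1 k] 0) atTop (𝓝 (g + x)) :=
      tendsto_nhds_iff.2 fun j => (tendsto_nhds_iff.1 (tendsto_step_iterate_zero x) j).mono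
        fun k hk => by rw [add_val, add_val, hk]
    refine ((hφ.tendsto _).comp hx).congr fun k => ?_
    rw [Function.comp_apply, ← step_iterate_eq_add, (hφf.iterate_right _).eq]
  exact tendsto_nhds_unique (key g) (h ▸ key g')

def fiberSubgroup (hφ : Continuous φ) (hφf : Function.Semiconj φ p.step f) :
    AddSubgroup p.space where
  carrier := {ν | φ ν = φ 0}
  zero_mem' := rfl
  add_mem' {a b} (ha : φ a = φ 0) (hb : φ b = φ 0) := by
    change φ (a + b) = φ 0
    rw [map_add_eq_map_add hφ hφf ha, zero_add, hb]
  neg_mem' {a} (ha : φ a = φ 0) := by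
    change φ (-a) = φ 0
    rw [← zero_add (-a), ← map_add_eq_map_add hφ hφf ha, add_neg_cancel]

theorem exists_dvd_chain_map_eq_iff (hφ : Continuous φ) (hφf : Function.Semiconj φ p.step f) :
    ∃ e : ℕ → ℕ, (∀ k, e k ∣ p.m k) ∧ (∀ k, e k ∣ e (k + 1)) ∧
      ∀ g g', φ g = φ g' ↔ ∀ k, g.1 k ≡ g'.1 k [MOD e k] := by
  obtain ⟨e, hem, hee, hH⟩ := exists_dvd_chain_of_isClosed (fiberSubgroup hφ hφf)
    (isClosed_eq hφ continuous_const)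
  refine ⟨e, hem, hee, fun g g' => ?_⟩
  have hsub : φ g = φ g' ↔ g - g' ∈ fiberSubgroup hφ hφf := by
    refine ⟨fun h => ?_, fun h => ?_⟩
    · change φ (g - g') = φ 0
      rw [sub_eq_add_neg, map_add_eq_map_add hφ hφf h, add_neg_cancel]
    · have := map_add_eq_map_add hφ hφf h g'
      rwa [sub_add_cancel, zero_add] at this
  simp only [hsub, hH, dvd_sub_val_iff_modEq (hem _)]

lemma isOdometer_range_of_tendsto (hφ : Continuous φ) (hφf : Function.Semiconj φ p.step f)
    (hem : ∀ k, e k ∣ p.m k) (hee : ∀ k, e k ∣ e (k + 1))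
    (hφe : ∀ g g', φ g = φ g' ↔ ∀ k, g.1 k ≡ g'.1 k [MOD e k]) (he : Tendsto e atTop atTop) :
    IsOdometer f (range φ) := by
  let q : PeriodicStructure := ⟨e, fun k => Nat.pos_of_dvd_of_pos (hem k) (p.pos k), hee, he⟩
  have hρ : Topology.IsQuotientMap (reduce (q := q) hem) := (continuous_reduce hem).isClosedMap
    |>.isQuotientMap (continuous_reduce hem) (reduce_surjective hem)
  let ψ : q.space → range φ := fun w =>
    rangeFactorization φ (Function.surjInv (reduce_surjective hem) w)
  have hψ : ∀ a, ψ (reduce hem a) = rangeFactorization φ a := fun a => Subtype.ext <|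
    (hφe _ _).2 <| (reduce_eq_reduce_iff hem).1 <| Function.surjInv_eq (reduce_surjective hem) _
  have hψc : Continuous ψ := hρ.continuous_iff.2 <| by
    convert hφ.rangeFactorization using 1
    exact funext hψ
  have hψb : Function.Bijective ψ := by
    refine ⟨fun w w' hww' => ?_, fun ⟨_, a, ha⟩ => ⟨reduce hem a, by rw [hψ]; exact Subtype.ext ha⟩⟩
    obtain ⟨a, rfl⟩ := reduce_surjective hem w
    obtain ⟨b, rfl⟩ := reduce_surjective hem w'
    rw [hψ, hψ] at hww'
    exact (reduce_eq_reduce_iff hem).2 ((hφe a b).1 (congrArg Subtype.val hww'))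
  refine ⟨q, Continuous.homeoOfEquivCompactToT2 (f := Equiv.ofBijective ψ hψb) hψc, fun w => ?_⟩
  obtain ⟨a, rfl⟩ := reduce_surjective hem w
  change f (ψ (reduce hem a)) = ψ (q.step (reduce hem a))
  rw [← reduce_step, hψ, hψ]
  exact (hφf a).symm

theorem isPeriodicOrbit_or_isOdometer_range (hφ : Continuous φ)
    (hφf : Function.Semiconj φ p.step f) :
    IsPeriodicOrbit f (range φ) ∨ IsOdometer f (range φ) := by
  obtain ⟨e, hem, hee, hφe⟩ := exists_dvd_chain_map_eq_iff hφ hφf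
  by_cases hbdd : BddAbove (range e)
  · exact Or.inl (isPeriodicOrbit_range_of_bddAbove hφf hem hee hφe hbdd)
  · refine Or.inr (isOdometer_range_of_tendsto hφ hφf hem hee hφe ?_)
    refine tendsto_atTop_atTop_of_monotone (monotone_nat_of_le_succ fun k => Nat.le_of_dvd
      (Nat.pos_of_dvd_of_pos (hem _) (p.pos _)) (hee k)) fun b => ?_
    obtain ⟨_, ⟨a, rfl⟩, hb⟩ := not_bddAbove_iff.1 hbdd b
    exact ⟨a, hb.le⟩

end Factor

end PeriodicStructure

section NearPeriodic

variable {X : Type*} [PseudoMetricSpace X]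

def NearPeriodicFrom (u : ℕ → X) (A N : ℕ) (η : ℝ) : Prop :=
  ∀ i ≥ A, ∀ j ≥ A, i ≡ j [MOD N] → dist (u i) (u j) ≤ η

def AsymptoticallyRegular (f : X → X) (p : PeriodicStructure) (y : X) : Prop :=
  ∀ η > 0, ∃ k B, NearPeriodicFrom (fun i => f^[i] y) B (p.m k) η

namespace NearPeriodicFrom

variable {u v : ℕ → X} {A N : ℕ} {η δ : ℝ}

lemma mono (hu : NearPeriodicFrom u A N η) (h : η ≤ δ) : NearPeriodicFrom u A N δ :=
  fun i hi j hj hij => (hu i hi j hj hij).trans h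

lemma of_dist_le (hu : NearPeriodicFrom u A N η) (hv : ∀ i, dist (v i) (u i) ≤ δ) :
    NearPeriodicFrom v A N (η + 2 * δ) := fun i hi j hj hij =>
  calc dist (v i) (v j) ≤ dist (v i) (u i) + dist (u i) (u j) + dist (u j) (v j) :=
        dist_triangle4 _ _ _ _
    _ ≤ δ + η + δ := by
        gcongr
        exacts [hv i, hu i hi j hj hij, dist_comm (u j) (v j) ▸ hv j]
    _ = η + 2 * δ := by ring

lemma of_tendsto {w : ℕ → ℕ → X} (hw : ∀ i, Tendsto (fun m => w m i) atTop (𝓝 (v i)))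
    (h : ∀ᶠ m in atTop, NearPeriodicFrom (w m) A N η) : NearPeriodicFrom v A N η :=
  fun i hi j hj hij => le_of_tendsto ((hw i).dist (hw j)) (h.mono fun _ hm => hm i hi j hj hij)

end NearPeriodicFrom

/-- The times visited by the pseudo-orbit that follows an orbit up to time `A` and from then on
repeats its stretch `[A, A + N)`. -/
def cycleIndex (A N i : ℕ) : ℕ := if i < A then i else A + (i - A) % N

variable {A N : ℕ}

lemma cycleIndex_zero : cycleIndex A N 0 = 0 := by
  unfold cycleIndex; split_ifs <;> simp_all

lemma le_cycleIndex {B i : ℕ} (hBA : B ≤ A) (hBi : B ≤ i) : B ≤ cycleIndex A N i := by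
  unfold cycleIndex; split_ifs <;> omega

lemma cycleIndex_modEq {M : ℕ} (hMN : M ∣ N) (i : ℕ) : cycleIndex A N i ≡ i [MOD M] := by
  unfold cycleIndex
  split_ifs with h
  · rfl
  · refine Nat.ModEq.of_dvd hMN ?_
    conv_rhs => rw [← Nat.add_sub_cancel' (not_lt.1 h)]
    exact (Nat.mod_modEq _ _).add_left A

lemma cycleIndex_eq_of_modEq {i j : ℕ} (hi : A ≤ i) (hj : A ≤ j) (h : i ≡ j [MOD N]) :
    cycleIndex A N i = cycleIndex A N j := by
  rw [cycleIndex, cycleIndex, if_neg (not_lt.2 hi), if_neg (not_lt.2 hj)]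
  congr 1
  refine Nat.ModEq.add_right_cancel' A ?_
  rwa [Nat.sub_add_cancel hi, Nat.sub_add_cancel hj]

lemma cycleIndex_succ (A N i : ℕ) :
    cycleIndex A N (i + 1) = cycleIndex A N i + 1 ∨
      cycleIndex A N i + 1 = A + N ∧ cycleIndex A N (i + 1) = A := by
  unfold cycleIndex
  rcases lt_or_ge (i + 1) A with h | h
  · simp [h, (by omega : i < A)]
  rcases eq_or_lt_of_le h with h | h
  · subst h; simp
  rw [if_neg (by omega), if_neg (by omega), Nat.sub_add_comm (by omega)]
  obtain ⟨r, q, hr, hi⟩ : ∃ r q, r = (i - A) % N ∧ i - A = r + N * q :=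
    ⟨_, _, rfl, (Nat.mod_add_div _ _).symm⟩
  rw [← hr, hi, add_right_comm, Nat.add_mul_mod_self_left]
  rcases Nat.eq_zero_or_pos N with hN | hN
  · simp [hN, add_assoc]
  rcases lt_or_eq_of_le (show r + 1 ≤ N from hr ▸ Nat.mod_lt _ hN) with h' | h'
  · simp [Nat.mod_eq_of_lt h', add_assoc]
  · simp [h', add_assoc]

lemma nearPeriodicFrom_comp_cycleIndex (u : ℕ → X) :
    NearPeriodicFrom (fun i => u (cycleIndex A N i)) A N 0 := fun i hi j hj hij => by
  dsimp only
  rw [cycleIndex_eq_of_modEq hi hj hij, dist_self]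

lemma NearPeriodicFrom.comp_cycleIndex {u : ℕ → X} {B M : ℕ} {η : ℝ}
    (hu : NearPeriodicFrom u B M η) (hBA : B ≤ A) (hMN : M ∣ N) :
    NearPeriodicFrom (fun i => u (cycleIndex A N i)) B M η := fun i hi j hj hij =>
  hu _ (le_cycleIndex hBA hi) _ (le_cycleIndex hBA hj)
    ((cycleIndex_modEq hMN i).trans (hij.trans (cycleIndex_modEq hMN j).symm))

end NearPeriodic

section Shadowing

variable {X : Type*} [PseudoMetricSpace X] {f : X → X}

lemma dist_iterate_cycleIndex_succ_le {x : X} {A N : ℕ} {δ : ℝ} (hδ : 0 ≤ δ)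
    (hret : dist (f^[A + N] x) (f^[A] x) ≤ δ) (i : ℕ) :
    dist (f (f^[cycleIndex A N i] x)) (f^[cycleIndex A N (i + 1)] x) ≤ δ := by
  rw [← Function.iterate_succ_apply' f, Nat.succ_eq_add_one]
  rcases cycleIndex_succ A N i with h | ⟨h₁, h₂⟩
  · rwa [h, dist_self]
  · rwa [h₁, h₂]

lemma exists_add_le_and_dist_le [CompactSpace X] (u : ℕ → X) {δ : ℝ} (hδ : 0 < δ) (L : ℕ) :
    ∃ j j', j + L ≤ j' ∧ dist (u j') (u j) ≤ δ := by
  obtain ⟨_, ψ, hψ, hlim⟩ := CompactSpace.tendsto_subseq u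
  obtain ⟨n, hn⟩ := Metric.cauchySeq_iff'.1 hlim.cauchySeq δ hδ
  exact ⟨ψ n, ψ (L + n), by have := hψ.add_le_nat L n; omega, (hn _ (by omega)).le⟩

/-- The return is sought among the times `A + t * N`, so that the new period is a multiple
`c * N` of the old one. -/
lemma exists_dist_iterate_cycleIndex_le [CompactSpace X] (hsh : ShadowingProperty f) {η : ℝ}
    (hη : 0 < η) (Y : X) (A N : ℕ) :
    ∃ Y' A' c, A ≤ A' ∧ 2 ≤ c ∧ ∀ i, dist (f^[i] Y') (f^[cycleIndex A' (c * N) i] Y) ≤ η := by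
  obtain ⟨δ, hδ, hshad⟩ := hsh η hη
  obtain ⟨j, j', hjj', hret⟩ := exists_add_le_and_dist_le (fun t => f^[A + t * N] Y) hδ 2
  have hA : A + j * N + (j' - j) * N = A + j' * N := by
    rw [add_assoc, ← add_mul, Nat.add_sub_cancel' (by omega)]
  obtain ⟨Y', hY'⟩ := hshad _ (dist_iterate_cycleIndex_succ_le hδ.le (hA ▸ hret))
  exact ⟨Y', A + j * N, j' - j, Nat.le_add_right _ _, by omega, hY'⟩

lemma exists_seq_dist_iterate_cycleIndex_le [CompactSpace X] (hsh : ShadowingProperty f) (x : X)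
    {ε : ℝ} (hε : 0 < ε) :
    ∃ (Y : ℕ → X) (A : ℕ → ℕ) (p : PeriodicStructure), Y 0 = x ∧ Monotone A ∧
      ∀ k i, dist (f^[i] (Y (k + 1))) (f^[cycleIndex (A (k + 1)) (p.m (k + 1)) i] (Y k)) ≤
        ε / 2 ^ (k + 1) := by
  choose Y' A' c hA hc hY using fun (k : ℕ) (s : X × ℕ × ℕ) =>
    exists_dist_iterate_cycleIndex_le hsh (η := ε / 2 ^ (k + 1)) (by positivity) s.1 s.2.1 s.2.2
  let S : ℕ → X × ℕ × ℕ := fun k =>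
    Nat.rec (x, 0, 1) (fun k s => (Y' k s, A' k s, c k s * s.2.2)) k
  have hS : ∀ k, S (k + 1) = (Y' k (S k), A' k (S k), c k (S k) * (S k).2.2) := fun _ => rfl
  have hpos : ∀ k, 0 < (S k).2.2 := by
    intro k
    induction k with
    | zero => exact one_pos
    | succ k ih => rw [hS]; exact Nat.mul_pos (by linarith [hc k (S k)]) ih
  have hlt : ∀ k, (S k).2.2 < (S (k + 1)).2.2 := fun k => by
    rw [hS]; nlinarith [hc k (S k), hpos k]
  refine ⟨fun k => (S k).1, fun k => (S k).2.1, ⟨fun k => (S k).2.2, hpos,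
    fun k => by rw [hS]; exact dvd_mul_left _ _, (strictMono_nat_of_lt_succ hlt).tendsto_atTop⟩,
    rfl, monotone_nat_of_le_succ fun k => by rw [hS]; exact hA k (S k), fun k => hY k (S k)⟩

/-- The error bound collects `2 * ε / 2 ^ (j + 1)` for each level `k ≤ j < k + 1 + n`. -/
lemma nearPeriodicFrom_iterate_seq {Y : ℕ → X} {A : ℕ → ℕ} {p : PeriodicStructure} {ε : ℝ}
    (hA : Monotone A) (hY : ∀ k i, dist (f^[i] (Y (k + 1)))
      (f^[cycleIndex (A (k + 1)) (p.m (k + 1)) i] (Y k)) ≤ ε / 2 ^ (k + 1)) (k n : ℕ) :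
    NearPeriodicFrom (fun i => f^[i] (Y (k + 1 + n))) (A (k + 1)) (p.m (k + 1))
      (2 * ε / 2 ^ k - 2 * ε / 2 ^ (k + 1 + n)) := by
  induction n with
  | zero =>
    convert (nearPeriodicFrom_comp_cycleIndex fun i => f^[i] (Y k)).of_dist_le (hY k) using 1
    rw [add_zero, pow_succ]
    ring
  | succ n ih =>
    refine ((ih.comp_cycleIndex (hA (by omega)) (p.m_dvd_m (by omega))).of_dist_le
      (hY (k + 1 + n))).mono (le_of_eq ?_)
    rw [← add_assoc, pow_succ]
    ring

theorem exists_asymptoticallyRegular_dist_le [CompactSpace X] (hf : Continuous f)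
    (hsh : ShadowingProperty f) (x : X) {ε : ℝ} (hε : 0 < ε) :
    ∃ y, dist x y ≤ ε ∧ ∃ p, AsymptoticallyRegular f p y := by
  obtain ⟨Y, A, p, rfl, hA, hY⟩ := exists_seq_dist_iterate_cycleIndex_le hsh x hε
  have hstep : ∀ k, dist (Y k) (Y (k + 1)) ≤ ε / 2 / 2 ^ k := fun k => by
    simpa [cycleIndex_zero, dist_comm, pow_succ, div_div, mul_comm] using hY k 0
  obtain ⟨y, hy⟩ := cauchySeq_tendsto_of_complete (cauchySeq_of_le_geometric_two hstep)
  refine ⟨y, dist_le_of_le_geometric_two_of_tendsto₀ hstep hy, p, fun η hη => ?_⟩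
  obtain ⟨k, hk⟩ := ((tendsto_const_nhds.div_atTop (tendsto_pow_atTop_atTop_of_one_lt
    one_lt_two)).eventually (gt_mem_nhds hη)).exists (f := atTop)
      (p := fun k : ℕ => 2 * ε / 2 ^ k < η)
  refine ⟨k + 1, A (k + 1), (NearPeriodicFrom.of_tendsto
    (fun i => ((hf.iterate i).tendsto y).comp hy) ?_).mono hk.le⟩
  filter_upwards [eventually_ge_atTop (k + 1)] with m hm
  obtain ⟨n, rfl⟩ := Nat.exists_eq_add_of_le hm
  exact (nearPeriodicFrom_iterate_seq hA hY k n).mono (sub_le_self _ (by positivity))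

end Shadowing

section OrbitLimit

open PeriodicStructure

variable {X : Type*} [MetricSpace X] {f : X → X} {p : PeriodicStructure} {y : X}

lemma val_add_mul_modEq (g : p.space) {j k : ℕ} (h : j ≤ k) :
    g.1 k + k * p.m k ≡ g.1 j [MOD p.m j] :=
  (Nat.ModEq.of_dvd (p.m_dvd_m h) (Nat.add_mul_mod_self_right _ _ _)).trans (val_modEq g h).symm

lemma le_val_add_mul (g : p.space) (k : ℕ) : k ≤ g.1 k + k * p.m k :=
  (Nat.le_mul_of_pos_right k (p.pos k)).trans (Nat.le_add_left _ _)

lemma AsymptoticallyRegular.cauchySeq (hy : AsymptoticallyRegular f p y) (g : p.space) :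
    CauchySeq fun k => f^[g.1 k + k * p.m k] y := by
  refine Metric.cauchySeq_iff.2 fun η hη => ?_
  obtain ⟨k₀, B, hB⟩ := hy (η / 2) (half_pos hη)
  refine ⟨max k₀ B, fun k hk k' hk' => (hB _ ?_ _ ?_ ?_).trans_lt (half_lt_self hη)⟩
  · exact (le_of_max_le_right hk).trans (le_val_add_mul g k)
  · exact (le_of_max_le_right hk').trans (le_val_add_mul g k')
  · exact (val_add_mul_modEq g (le_of_max_le_left hk)).trans
      (val_add_mul_modEq g (le_of_max_le_left hk')).symm

/-- Any times `≡ g.1 k [MOD p.m k]` tending to infinity would do in place of `g.1 k + k * p.m k`. -/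
noncomputable def orbitLimit (f : X → X) (p : PeriodicStructure) (y : X) (g : p.space) : X :=
  haveI : Nonempty X := ⟨y⟩
  limUnder atTop fun k => f^[g.1 k + k * p.m k] y

variable [CompleteSpace X]

lemma tendsto_orbitLimit (hy : AsymptoticallyRegular f p y) (g : p.space) :
    Tendsto (fun k => f^[g.1 k + k * p.m k] y) atTop (𝓝 (orbitLimit f p y g)) :=
  haveI : Nonempty X := ⟨y⟩
  (hy.cauchySeq g).tendsto_limUnder

lemma dist_iterate_orbitLimit_le (hy : AsymptoticallyRegular f p y) {k B : ℕ} {η : ℝ}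
    (hB : NearPeriodicFrom (fun i => f^[i] y) B (p.m k) η) {s : ℕ} (hs : B ≤ s) {g : p.space}
    (hsg : s ≡ g.1 k [MOD p.m k]) : dist (f^[s] y) (orbitLimit f p y g) ≤ η := by
  refine le_of_tendsto (tendsto_const_nhds.dist (tendsto_orbitLimit hy g)) ?_
  filter_upwards [eventually_ge_atTop (max k B)] with k' hk'
  exact hB _ hs _ ((le_of_max_le_right hk').trans (le_val_add_mul g k'))
    (hsg.trans (val_add_mul_modEq g (le_of_max_le_left hk')).symm)

lemma continuous_orbitLimit (hy : AsymptoticallyRegular f p y) :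
    Continuous (orbitLimit f p y) := by
  refine continuous_iff_continuousAt.2 fun g => Metric.tendsto_nhds.2 fun η hη => ?_
  obtain ⟨k, B, hB⟩ := hy (η / 3) (by positivity)
  have hs : g.1 k + B * p.m k ≡ g.1 k [MOD p.m k] := Nat.add_mul_mod_self_right _ _ _
  have hBs : B ≤ g.1 k + B * p.m k :=
    (Nat.le_mul_of_pos_right B (p.pos k)).trans (Nat.le_add_left _ _)
  filter_upwards [tendsto_nhds_iff.1 (tendsto_id (x := 𝓝 g)) k] with g' hg'
  calc dist (orbitLimit f p y g') (orbitLimit f p y g)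
      ≤ dist (f^[g.1 k + B * p.m k] y) (orbitLimit f p y g') +
        dist (f^[g.1 k + B * p.m k] y) (orbitLimit f p y g) := dist_triangle_left _ _ _
    _ ≤ η / 3 + η / 3 := add_le_add (dist_iterate_orbitLimit_le hy hB hBs (hg' ▸ hs))
        (dist_iterate_orbitLimit_le hy hB hBs hs)
    _ < η := by linarith

lemma orbitLimit_semiconj (hf : Continuous f) (hy : AsymptoticallyRegular f p y) :
    Function.Semiconj (orbitLimit f p y) p.step f := by
  intro g
  refine eq_of_forall_dist_le fun η hη => ?_
  obtain ⟨k, B, hB⟩ := hy η hη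
  refine le_of_tendsto (tendsto_const_nhds.dist
    ((hf.tendsto _).comp (tendsto_orbitLimit hy g))) ?_
  filter_upwards [eventually_ge_atTop (max k B)] with k' hk'
  rw [Function.comp_apply, ← Function.iterate_succ_apply' f, dist_comm]
  refine dist_iterate_orbitLimit_le hy hB ?_ ?_
  · exact ((le_of_max_le_right hk').trans (le_val_add_mul g k')).trans (Nat.le_succ _)
  · exact ((val_add_mul_modEq g (le_of_max_le_left hk')).add_right 1).trans
      (Nat.mod_modEq _ _).symm

lemma range_orbitLimit (hy : AsymptoticallyRegular f p y) :
    range (orbitLimit f p y) = omegaLimitPt f y := by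
  refine Subset.antisymm ?_ fun q hq => ?_
  · rintro _ ⟨g, rfl⟩
    refine ⟨fun k => g.1 k + k * p.m k, strictMono_nat_of_lt_succ fun k => ?_,
      tendsto_orbitLimit hy g⟩
    have h₁ : g.1 k ≤ g.1 (k + 1) := (g.2 k).2 ▸ Nat.mod_le _ _
    have h₂ : p.m k ≤ p.m (k + 1) := Nat.le_of_dvd (p.pos _) (p.dvd k)
    nlinarith [p.pos k]
  rw [← (isCompact_range (continuous_orbitLimit hy)).isClosed.closure_eq]
  refine Metric.mem_closure_iff.2 fun η hη => ?_
  obtain ⟨k, B, hB⟩ := hy (η / 2) (half_pos hη)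
  obtain ⟨ψ, hψ, hlim⟩ := hq
  obtain ⟨n, hnB, hnq⟩ := ((hψ.tendsto_atTop.eventually (eventually_ge_atTop B)).and
    (hlim.eventually (Metric.ball_mem_nhds q (half_pos hη)))).exists
  have hsg : ψ n ≡ (p.step^[ψ n] 0).1 k [MOD p.m k] := by
    rw [step_iterate_val, zero_val, zero_add]
    exact (Nat.mod_modEq _ _).symm
  refine ⟨_, mem_range_self (p.step^[ψ n] 0), ?_⟩
  calc dist q (orbitLimit f p y (p.step^[ψ n] 0))
      ≤ dist (f^[ψ n] y) q + dist (f^[ψ n] y) (orbitLimit f p y (p.step^[ψ n] 0)) :=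
        dist_triangle_left _ _ _
    _ < η / 2 + η / 2 := add_lt_add_of_lt_of_le hnq (dist_iterate_orbitLimit_le hy hB hnB hsg)
    _ = η := add_halves η

theorem AsymptoticallyRegular.isPeriodicOrbit_or_isOdometer (hf : Continuous f)
    (hy : AsymptoticallyRegular f p y) :
    IsPeriodicOrbit f (omegaLimitPt f y) ∨ IsOdometer f (omegaLimitPt f y) := by
  rw [← range_orbitLimit hy]
  exact isPeriodicOrbit_or_isOdometer_range (continuous_orbitLimit hy) (orbitLimit_semiconj hf hy)

end OrbitLimit

theorem dense_A_of_shadowing {X : Type*} [MetricSpace X] [CompactSpace X]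
    (f : X → X) (hf : Continuous f) (hsh : ShadowingProperty f) :
    Dense {x : X |
      IsPeriodicOrbit f (omegaLimitPt f x) ∨ IsOdometer f (omegaLimitPt f x)} := by
  refine Metric.dense_iff.2 fun x r hr => ?_
  obtain ⟨y, hxy, p, hy⟩ := exists_asymptoticallyRegular_dist_le hf hsh x (half_pos hr)
  exact ⟨y, by rw [mem_ball, dist_comm]; linarith, hy.isPeriodicOrbit_or_isOdometer hf⟩
end
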